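/- arXiv:math/0703908 — 5 statements merged into one kernel-verified Lean document; each statement's English description precedes it below -/
import Mathlib

section
/- The integral from 0 to infinity of (1/y)·((2/√π)·∫_{√y}^∞ e^{-u²} du − e^{-y}) dy equals −2·ln 2. -/
/-!
For `y > 0` the Gaussian tail has the representation
`(2/√π) ∫_{√y}^∞ e^{-u²} du = (2/π) ∫₀^∞ e^{-(1+s²)y} / (1+s²) ds`,
obtained by writing `e^{-u²} = (2/√π) ∫₀^∞ u e^{-(1+s²)u²} ds` and swapping the integrals.
Since also `e^{-y} = (2/π) ∫₀^∞ e^{-y} / (1+s²) ds`, the integrand equals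
`-(2/π) ∫₀^∞ (e^{-y} - e^{-(1+s²)y}) / (y (1+s²)) ds`, whose kernel is nonnegative.
After swapping once more, Frullani's integral evaluates the `y`-integral to `log (1+s²)`, and the
substitution `s = tan θ` turns `∫₀^∞ log (1+s²) / (1+s²) ds` into
`-2 ∫₀^{π/2} log (cos θ) dθ = π log 2`.
-/

open Real MeasureTheory Set Filter
open scoped Topology

theorem integral_integral_swap_of_nonneg {α β : Type*} [MeasurableSpace α] [MeasurableSpace β]
    {μ : Measure α} {ν : Measure β} [SFinite μ] [SFinite ν] {f : α → β → ℝ}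
    (hf : AEStronglyMeasurable (Function.uncurry f) (μ.prod ν))
    (hf_nonneg : ∀ᵐ x ∂μ, 0 ≤ᵐ[ν] f x) (hf_sec : ∀ᵐ x ∂μ, Integrable (f x) ν)
    (hf_int : Integrable (fun x ↦ ∫ y, f x y ∂ν) μ) :
    ∫ x, ∫ y, f x y ∂ν ∂μ = ∫ y, ∫ x, f x y ∂μ ∂ν := by
  refine integral_integral_swap ((integrable_prod_iff hf).2 ⟨hf_sec, hf_int.congr ?_⟩)
  filter_upwards [hf_nonneg] with x hx
  exact integral_congr_ae (hx.mono fun y hy ↦ (norm_of_nonneg hy).symm)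

theorem integral_Ioi_mul_exp_neg_mul_sq {b : ℝ} (hb : 0 < b) (a : ℝ) :
    ∫ u in Ioi a, u * exp (-b * u ^ 2) = exp (-b * a ^ 2) / (2 * b) := by
  have hderiv (u : ℝ) : HasDerivAt (fun u ↦ -exp (-b * u ^ 2) / (2 * b))
      (u * exp (-b * u ^ 2)) u := by
    refine ((((hasDerivAt_pow 2 u).const_mul (-b)).exp).neg.div_const (2 * b)).congr_deriv ?_
    field_simp
    ring
  have hexponent : Tendsto (fun u : ℝ ↦ -b * u ^ 2) atTop atBot :=
    (tendsto_pow_atTop two_ne_zero).const_mul_atTop_of_neg (neg_neg_of_pos hb)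
  have hlim : Tendsto (fun u ↦ -exp (-b * u ^ 2) / (2 * b)) atTop (𝓝 0) := by
    simpa using (tendsto_exp_atBot.comp hexponent).neg.div_const (2 * b)
  rw [integral_Ioi_of_hasDerivAt_of_tendsto' (fun u _ ↦ hderiv u)
    (integrable_mul_exp_neg_mul_sq hb).integrableOn hlim]
  ring

theorem integral_Ioi_exp_neg_sq_eq_integral {a : ℝ} (ha : 0 ≤ a) :
    ∫ u in Ioi a, exp (-u ^ 2) =
      (√π)⁻¹ * ∫ s in Ioi 0, (1 + s ^ 2)⁻¹ * exp (-(1 + s ^ 2) * a ^ 2) := by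
  set F : ℝ → ℝ → ℝ := fun u s ↦ u * exp (-(1 + s ^ 2) * u ^ 2)
  have hF_sec {u : ℝ} (hu : 0 < u) :
      Integrable (F u) (volume.restrict (Ioi 0)) ∧
        ∫ s in Ioi 0, F u s = √π / 2 * exp (-u ^ 2) := by
    have hsplit : F u = fun s ↦ u * exp (-u ^ 2) * exp (-u ^ 2 * s ^ 2) := by
      ext s
      simp only [F]
      rw [mul_assoc, ← exp_add]
      ring_nf
    rw [hsplit, integral_const_mul, integral_gaussian_Ioi, sqrt_div pi_pos.le, sqrt_sq hu.le]
    refine ⟨((integrable_exp_neg_mul_sq (by positivity)).const_mul _).restrict, ?_⟩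
    field_simp
  have hswap : ∫ u in Ioi a, ∫ s in Ioi 0, F u s = ∫ s in Ioi 0, ∫ u in Ioi a, F u s := by
    have hpos : ∀ᵐ u ∂(volume.restrict (Ioi a)), 0 < u :=
      (ae_restrict_mem measurableSet_Ioi).mono fun u hu ↦ ha.trans_lt hu
    refine integral_integral_swap_of_nonneg (by fun_prop) ?_ ?_ ?_
    · filter_upwards [hpos] with u hu
      exact ae_of_all _ fun s ↦ by positivity
    · filter_upwards [hpos] with u hu using (hF_sec hu).1
    · refine (((integrable_exp_neg_mul_sq one_pos).const_mul (√π / 2)).restrict).congr ?_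
      filter_upwards [hpos] with u hu
      simp [(hF_sec hu).2]
  calc ∫ u in Ioi a, exp (-u ^ 2) = ∫ u in Ioi a, 2 / √π * ∫ s in Ioi 0, F u s := by
        refine setIntegral_congr_fun measurableSet_Ioi fun u hu ↦ ?_
        rw [(hF_sec (ha.trans_lt hu)).2]
        field_simp
    _ = 2 / √π * ∫ s in Ioi 0, (1 + s ^ 2)⁻¹ * exp (-(1 + s ^ 2) * a ^ 2) / 2 := by
        rw [integral_const_mul, hswap]
        congr 1
        refine setIntegral_congr_fun measurableSet_Ioi fun s _ ↦ ?_
        rw [integral_Ioi_mul_exp_neg_mul_sq (by positivity)]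
        field_simp
    _ = _ := by
        rw [integral_div]
        ring

theorem exp_neg_sub_exp_neg_mul_le (c y : ℝ) :
    exp (-y) - exp (-(c * y)) ≤ (c - 1) * y * exp (-y) := by
  have h := add_one_le_exp (-((c - 1) * y))
  have hsplit : exp (-(c * y)) = exp (-y) * exp (-((c - 1) * y)) := by
    rw [← exp_add]; ring_nf
  nlinarith [exp_pos (-y)]

theorem integrableOn_Ioi_inv_mul_exp_neg_sub_exp_neg_mul {c : ℝ} (hc : 1 ≤ c) :
    IntegrableOn (fun y ↦ y⁻¹ * (exp (-y) - exp (-(c * y)))) (Ioi 0) := by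
  refine Integrable.mono' (g := fun y ↦ (c - 1) * exp (-y))
    (by simpa using (exp_neg_integrableOn_Ioi 0 one_pos).const_mul (c - 1)) (by fun_prop) ?_
  filter_upwards [ae_restrict_mem measurableSet_Ioi] with y (hy : 0 < y)
  have hle : exp (-(c * y)) ≤ exp (-y) := exp_le_exp.2 (by nlinarith)
  rw [norm_of_nonneg (mul_nonneg (inv_nonneg.2 hy.le) (sub_nonneg.2 hle)), inv_mul_le_iff₀ hy]
  linarith [exp_neg_sub_exp_neg_mul_le c y]

theorem integral_Ioi_inv_mul_exp_neg_sub_exp_neg_mul {c : ℝ} (hc : 1 ≤ c) :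
    ∫ y in Ioi 0, y⁻¹ * (exp (-y) - exp (-(c * y))) = log c := by
  have h := Frullani.integral_Ioi_eq (f := fun x ↦ exp (-x)) (a := 1) (b := c) (L := 1) (R := 0)
    (ContinuousOn.locallyIntegrableOn (by fun_prop) measurableSet_Ioi) one_pos (by linarith)
    (((continuous_exp.comp continuous_neg).tendsto' 0 1 (by simp)).mono_left nhdsWithin_le_nhds)
    tendsto_exp_neg_atTop_nhds_zero
    (by simpa using integrableOn_Ioi_inv_mul_exp_neg_sub_exp_neg_mul hc)
  simpa using h

theorem integral_log_cos_zero_pi_div_two : ∫ x in 0..π / 2, log (cos x) = -log 2 * π / 2 := by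
  have h := intervalIntegral.integral_comp_sub_left (fun x ↦ log (sin x)) (a := 0) (b := π / 2)
    (π / 2)
  simp only [sin_pi_div_two_sub, sub_self, sub_zero] at h
  rw [h, integral_log_sin_zero_pi_div_two]

theorem tan_image_Ioo_zero_pi_div_two : tan '' Ioo 0 (π / 2) = Ioi 0 := by
  refine Subset.antisymm (image_subset_iff.2 fun x hx ↦ tan_pos_of_pos_of_lt_pi_div_two hx.1 hx.2)
    fun s (hs : 0 < s) ↦ ⟨arctan s, ⟨arctan_pos.2 hs, arctan_lt_pi_div_two s⟩, tan_arctan s⟩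

theorem cos_pos_of_mem_Ioo_zero_pi_div_two {x : ℝ} (hx : x ∈ Ioo 0 (π / 2)) : 0 < cos x :=
  cos_pos_of_mem_Ioo ⟨by linarith [hx.1, pi_pos], hx.2⟩

theorem hasDerivWithinAt_tan_Ioo_zero_pi_div_two {x : ℝ} (hx : x ∈ Ioo 0 (π / 2)) :
    HasDerivWithinAt tan (cos x ^ 2)⁻¹ (Ioo 0 (π / 2)) x :=
  (hasDerivAt_tan (cos_pos_of_mem_Ioo_zero_pi_div_two hx).ne').hasDerivWithinAt.congr_deriv
    (one_div _)

theorem injOn_tan_Ioo_zero_pi_div_two : InjOn tan (Ioo 0 (π / 2)) :=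
  injOn_tan.mono (Ioo_subset_Ioo (by linarith [pi_pos]) le_rfl)

section TanSubstitution

variable {E : Type*} [NormedAddCommGroup E] [NormedSpace ℝ E]

theorem integrableOn_Ioi_zero_iff_comp_tan (g : ℝ → E) :
    IntegrableOn g (Ioi 0) ↔ IntegrableOn (fun x ↦ (cos x ^ 2)⁻¹ • g (tan x)) (Ioo 0 (π / 2)) := by
  rw [← tan_image_Ioo_zero_pi_div_two, integrableOn_image_iff_integrableOn_abs_deriv_smul
    measurableSet_Ioo (fun _ ↦ hasDerivWithinAt_tan_Ioo_zero_pi_div_two)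
    injOn_tan_Ioo_zero_pi_div_two]
  simp only [abs_inv, abs_pow, sq_abs]

theorem integral_Ioi_zero_eq_integral_comp_tan (g : ℝ → E) :
    ∫ s in Ioi 0, g s = ∫ x in Ioo 0 (π / 2), (cos x ^ 2)⁻¹ • g (tan x) := by
  rw [← tan_image_Ioo_zero_pi_div_two, integral_image_eq_integral_abs_deriv_smul
    measurableSet_Ioo (fun _ ↦ hasDerivWithinAt_tan_Ioo_zero_pi_div_two)
    injOn_tan_Ioo_zero_pi_div_two]
  simp only [abs_inv, abs_pow, sq_abs]

end TanSubstitution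

theorem inv_cos_sq_smul_log_one_add_tan_sq {x : ℝ} (hx : x ∈ Ioo 0 (π / 2)) :
    (cos x ^ 2)⁻¹ • ((1 + tan x ^ 2)⁻¹ * log (1 + tan x ^ 2)) = -2 * log (cos x) := by
  have hcos := cos_pos_of_mem_Ioo_zero_pi_div_two hx
  rw [← inv_inv (1 + tan x ^ 2), inv_one_add_tan_sq hcos.ne', log_inv, log_pow, smul_eq_mul]
  field_simp
  push_cast
  ring

theorem integrableOn_Ioi_inv_one_add_sq_mul_log_one_add_sq :
    IntegrableOn (fun s ↦ (1 + s ^ 2)⁻¹ * log (1 + s ^ 2)) (Ioi 0) := by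
  rw [integrableOn_Ioi_zero_iff_comp_tan,
    integrableOn_congr_fun (fun x hx ↦ inv_cos_sq_smul_log_one_add_tan_sq hx) measurableSet_Ioo]
  exact (intervalIntegrable_log_cos.1.mono_set Ioo_subset_Ioc_self).const_mul (-2)

theorem integral_Ioi_inv_one_add_sq_mul_log_one_add_sq :
    ∫ s in Ioi 0, (1 + s ^ 2)⁻¹ * log (1 + s ^ 2) = π * log 2 := by
  rw [integral_Ioi_zero_eq_integral_comp_tan,
    setIntegral_congr_fun measurableSet_Ioo (fun x hx ↦ inv_cos_sq_smul_log_one_add_tan_sq hx),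
    integral_const_mul, ← integral_Ioc_eq_integral_Ioo,
    ← intervalIntegral.integral_of_le (by positivity), integral_log_cos_zero_pi_div_two]
  ring

noncomputable def frullaniKernel (y s : ℝ) : ℝ :=
  (1 + s ^ 2)⁻¹ * (y⁻¹ * (exp (-y) - exp (-((1 + s ^ 2) * y))))

theorem frullaniKernel_nonneg (y s : ℝ) : 0 ≤ frullaniKernel y s := by
  have hc : 1 ≤ 1 + s ^ 2 := le_add_of_nonneg_right (sq_nonneg s)
  refine mul_nonneg (by positivity) ?_
  rcases le_total 0 y with hy | hy
  · exact mul_nonneg (inv_nonneg.2 hy) (sub_nonneg.2 (exp_le_exp.2 (by nlinarith)))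
  · exact mul_nonneg_of_nonpos_of_nonpos (inv_nonpos.2 hy)
      (sub_nonpos.2 (exp_le_exp.2 (by nlinarith)))

theorem integrableOn_frullaniKernel (s : ℝ) : IntegrableOn (frullaniKernel · s) (Ioi 0) :=
  (integrableOn_Ioi_inv_mul_exp_neg_sub_exp_neg_mul
    (le_add_of_nonneg_right (sq_nonneg s))).const_mul _

theorem integral_frullaniKernel (s : ℝ) :
    ∫ y in Ioi 0, frullaniKernel y s = (1 + s ^ 2)⁻¹ * log (1 + s ^ 2) := by
  rw [← integral_Ioi_inv_mul_exp_neg_sub_exp_neg_mul (le_add_of_nonneg_right (sq_nonneg s)),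
    ← integral_const_mul]
  rfl

theorem integral_integral_frullaniKernel_swap :
    ∫ y in Ioi 0, ∫ s in Ioi 0, frullaniKernel y s =
      ∫ s in Ioi 0, ∫ y in Ioi 0, frullaniKernel y s :=
  (integral_integral_swap_of_nonneg (f := fun s y ↦ frullaniKernel y s)
    (by unfold frullaniKernel; fun_prop)
    (ae_of_all _ fun _ ↦ ae_of_all _ fun _ ↦ frullaniKernel_nonneg _ _)
    (ae_of_all _ integrableOn_frullaniKernel)
    (integrableOn_Ioi_inv_one_add_sq_mul_log_one_add_sq.congr_fun
      (fun s _ ↦ (integral_frullaniKernel s).symm) measurableSet_Ioi)).symm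

theorem integrand_eq_integral_frullaniKernel {y : ℝ} (hy : 0 < y) :
    (1 / y) * ((2 / √π) * (∫ u in Ioi √y, exp (-u ^ 2)) - exp (-y)) =
      -(2 / π) * ∫ s in Ioi 0, frullaniKernel y s := by
  have hdamped : IntegrableOn (fun s ↦ (1 + s ^ 2)⁻¹ * exp (-(1 + s ^ 2) * y)) (Ioi 0) := by
    refine integrable_inv_one_add_sq.integrableOn.mono' (by fun_prop) (ae_of_all _ fun s ↦ ?_)
    rw [norm_of_nonneg (by positivity)]
    exact mul_le_of_le_one_right (by positivity) (exp_le_one_iff.2 (by nlinarith [sq_nonneg s]))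
  have hkernel : ∫ s in Ioi 0, frullaniKernel y s =
      y⁻¹ * ((∫ s in Ioi 0, (1 + s ^ 2)⁻¹) * exp (-y)
        - ∫ s in Ioi 0, (1 + s ^ 2)⁻¹ * exp (-(1 + s ^ 2) * y)) := by
    rw [← integral_mul_const, ← integral_sub (integrable_inv_one_add_sq.integrableOn.mul_const _)
      hdamped, ← integral_const_mul]
    refine integral_congr_ae (ae_of_all _ fun s ↦ ?_)
    simp only [frullaniKernel, neg_mul]
    ring
  rw [integral_Ioi_exp_neg_sq_eq_integral (sqrt_nonneg y), sq_sqrt hy.le, hkernel,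
    integral_Ioi_inv_one_add_sq, arctan_zero, sub_zero]
  field_simp
  rw [sq_sqrt pi_pos.le]
  ring

/-- The integral from 0 to infinity of
`(1/y)·((2/√π)·∫_{√y}^∞ e^{-u²} du − e^{-y})` equals `−2·ln 2`. -/
theorem integral_g_eq_neg_two_log_two :
    ∫ y in Ioi (0:ℝ),
      (1 / y) * ((2 / Real.sqrt π) * (∫ u in Ioi (Real.sqrt y), Real.exp (-u ^ 2))
        - Real.exp (-y)) = -2 * Real.log 2 := by
  calc _ = ∫ y in Ioi 0, -(2 / π) * ∫ s in Ioi 0, frullaniKernel y s :=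
        setIntegral_congr_fun measurableSet_Ioi fun y hy ↦ integrand_eq_integral_frullaniKernel hy
    _ = -(2 / π) * ∫ s in Ioi 0, (1 + s ^ 2)⁻¹ * log (1 + s ^ 2) := by
        rw [integral_const_mul, integral_integral_frullaniKernel_swap]
        simp only [integral_frullaniKernel]
    _ = -2 * log 2 := by
        rw [integral_Ioi_inv_one_add_sq_mul_log_one_add_sq]
        field_simp
end

section
/- The limit as ε ↓ 0 of (G(ε) − 1/(2ε²)) equals −1/4, where G(ε) = ∑_{n=1}^∞ (1/√(2π))·∫_{ε√n}^∞ e^{-x²/2} dx. -/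
/-!
The substitution `x = ε √t` turns the normal tail `P(X > ε √n)` into `∫_{t > n} g_ε t dt`, where
`g_ε t = ε t^(-1/2) e^(-ε² t / 2) / (2 √(2π))` is half the `Gamma(1/2, ε²/2)` density. Summing
over `n ≥ 1` gives `G(ε) = ∫_0^∞ ⌊t⌋ g_ε t dt`, and the Gamma moments `∫ g_ε = 1/2`,
`∫ t g_ε = 1/(2ε²)` give `G(ε) - 1/(2ε²) + 1/4 = ∫_0^∞ (⌊t⌋ - t + 1/2) g_ε t dt`. The sawtooth
`⌊t⌋ - t + 1/2` has mean zero on every `[n, n + 1]` and `g_ε` is decreasing, so this integral is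
at most `∫_0^1 g_ε ≤ ε / √(2π)` in absolute value.
-/

open Real MeasureTheory Set Filter Topology

theorem hasSum_indicator_Ici_natCast_add_one {M : Type*} [AddCommMonoid M] [TopologicalSpace M]
    (f : ℝ → M) {t : ℝ} (ht : 0 ≤ t) :
    HasSum (fun n : ℕ => (Ici ((n : ℝ) + 1)).indicator f t) (⌊t⌋₊ • f t) := by
  have hmem : ∀ n : ℕ, t ∈ Ici ((n : ℝ) + 1) ↔ n ∈ Finset.range ⌊t⌋₊ := by
    intro n
    rw [mem_Ici, Finset.mem_range, Nat.lt_iff_add_one_le, Nat.le_floor_iff ht]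
    push_cast; rfl
  convert hasSum_sum_of_ne_finset_zero (L := .unconditional ℕ) (s := Finset.range ⌊t⌋₊)
    fun n hn => indicator_of_notMem (mt (hmem n).1 hn) f
  rw [Finset.sum_congr rfl fun n hn => indicator_of_mem ((hmem n).2 hn) f, Finset.sum_const,
    Finset.card_range]

theorem hasSum_integral_Ioi_natCast_add_one {f : ℝ → ℝ} (hf : IntegrableOn f (Ioi 0))
    (htf : IntegrableOn (fun t => t * f t) (Ioi 0)) :
    HasSum (fun n : ℕ => ∫ t in Ioi ((n : ℝ) + 1), f t) (∫ t in Ioi 0, (⌊t⌋₊ : ℝ) * f t) := by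
  have hsum : ∀ g : ℝ → ℝ, ∀ᵐ t ∂volume.restrict (Ioi 0),
      HasSum (fun n : ℕ => (Ici ((n : ℝ) + 1)).indicator g t) (⌊t⌋₊ * g t) := fun g => by
    filter_upwards [ae_restrict_mem measurableSet_Ioi] with t ht
    simpa only [nsmul_eq_mul] using hasSum_indicator_Ici_natCast_add_one g ht.le
  have hint : ∀ n : ℕ, ∫ t in Ioi ((n : ℝ) + 1), f t
      = ∫ t in Ioi 0, (Ici ((n : ℝ) + 1)).indicator f t := fun n => by
    rw [integral_indicator measurableSet_Ici, Measure.restrict_restrict measurableSet_Ici,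
      inter_eq_left.2 (Ici_subset_Ioi.2 (by positivity)), integral_Ici_eq_integral_Ioi]
  have hfloor : IntegrableOn (fun t => (⌊t⌋₊ : ℝ) * ‖f t‖) (Ioi 0) := by
    refine htf.norm.mono' ((measurable_from_top.comp Nat.measurable_floor).aestronglyMeasurable.mul
      hf.norm.aestronglyMeasurable) ?_
    filter_upwards [ae_restrict_mem measurableSet_Ioi] with t ht
    rw [norm_mul, norm_mul, Real.norm_of_nonneg (Nat.cast_nonneg _), norm_norm,
      Real.norm_of_nonneg ht.le]
    exact mul_le_mul_of_nonneg_right (Nat.floor_le ht.le) (norm_nonneg _)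
  simp_rw [hint]
  refine hasSum_integral_of_dominated_convergence
    (fun n t => (Ici ((n : ℝ) + 1)).indicator (‖f ·‖) t)
    (fun n => (hf.indicator measurableSet_Ici).aestronglyMeasurable)
    (fun n => Eventually.of_forall fun t => ?_) ?_ ?_ (hsum f)
  · simp only [norm_indicator_eq_indicator_norm, le_refl]
  · filter_upwards [hsum (‖f ·‖)] with t ht using ht.summable
  · refine hfloor.congr ?_
    filter_upwards [hsum (‖f ·‖)] with t ht using ht.tsum_eq.symm

theorem abs_natFloor_sub_add_half_le {t : ℝ} (ht : 0 ≤ t) : |(⌊t⌋₊ : ℝ) - t + 1 / 2| ≤ 1 / 2 := by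
  have := Nat.floor_le ht
  have := Nat.lt_floor_add_one t
  rw [abs_le]; constructor <;> linarith

theorem intervalIntegral_natFloor {E : Type*} [NormedAddCommGroup E] [NormedSpace ℝ E]
    (F : ℕ → ℝ → E) (n : ℕ) :
    ∫ t in (n : ℝ)..n + 1, F ⌊t⌋₊ t = ∫ t in (n : ℝ)..n + 1, F n t := by
  refine intervalIntegral.integral_congr_ae ?_
  filter_upwards [Measure.ae_ne volume ((n : ℝ) + 1)] with t hne ht
  rw [uIoc_of_le (by linarith)] at ht
  rw [Nat.floor_eq_on_Ico n t ⟨ht.1.le, lt_of_le_of_ne ht.2 hne⟩]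

theorem abs_intervalIntegral_natFloor_sub_add_half_mul_le {g : ℝ → ℝ} {n : ℕ}
    (hg : AntitoneOn g (Icc n (n + 1))) :
    |∫ t in (n : ℝ)..n + 1, ((⌊t⌋₊ : ℝ) - t + 1 / 2) * g t| ≤ (g n - g (n + 1)) / 2 := by
  have hnn : (n : ℝ) ≤ n + 1 := by linarith
  have hgi : IntervalIntegrable g volume n (n + 1) :=
    AntitoneOn.intervalIntegrable (by rwa [uIcc_of_le hnn])
  have hψ : ContinuousOn (fun t : ℝ => (n : ℝ) - t + 1 / 2) (uIcc (n : ℝ) (n + 1)) := by fun_prop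
  -- `t ↦ n - t + 1/2` has mean zero on `[n, n + 1]`, so `g` may be shifted by `g (n + 1)`
  have hmean : ∫ t in (n : ℝ)..n + 1, ((n : ℝ) - t + 1 / 2) * g (n + 1) = 0 := by
    rw [intervalIntegral.integral_mul_const, mul_eq_zero]
    left
    rw [intervalIntegral.integral_comp_sub_left (fun y => y + 1 / 2)]
    norm_num [intervalIntegral.integral_add, integral_id]
  have hshift : ∫ t in (n : ℝ)..n + 1, ((⌊t⌋₊ : ℝ) - t + 1 / 2) * g t
      = ∫ t in (n : ℝ)..n + 1, ((n : ℝ) - t + 1 / 2) * (g t - g (n + 1)) := by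
    rw [intervalIntegral_natFloor (fun m t => ((m : ℝ) - t + 1 / 2) * g t),
      ← sub_zero (∫ _ in _.._, _),
      ← hmean, ← intervalIntegral.integral_sub (hgi.continuousOn_mul hψ)
        ((continuous_const.intervalIntegrable _ _).continuousOn_mul hψ)]
    simp only [mul_sub]
  rw [hshift, ← Real.norm_eq_abs]
  calc _ ≤ (g n - g (n + 1)) / 2 * |((n : ℝ) + 1) - n| :=
        intervalIntegral.norm_integral_le_of_norm_le_const fun t ht => ?_
    _ = (g n - g (n + 1)) / 2 := by simp
  rw [uIoc_of_le hnn] at ht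
  have htI : t ∈ Icc (n : ℝ) (n + 1) := Ioc_subset_Icc_self ht
  have hlo : g (n + 1) ≤ g t := hg htI (right_mem_Icc.2 hnn) ht.2
  have hhi : g t ≤ g n := hg (left_mem_Icc.2 hnn) htI ht.1.le
  have hψt : ‖(n : ℝ) - t + 1 / 2‖ ≤ 1 / 2 := by
    rw [Real.norm_eq_abs, abs_le]; constructor <;> linarith [ht.1, ht.2]
  rw [norm_mul, Real.norm_of_nonneg (sub_nonneg.2 hlo)]
  calc _ ≤ 1 / 2 * (g n - g (n + 1)) :=
        mul_le_mul hψt (by linarith) (sub_nonneg.2 hlo) (by norm_num)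
    _ = _ := by ring

theorem integrableOn_natFloor_sub_add_half_mul {g : ℝ → ℝ} {a : ℝ} (ha : 0 ≤ a)
    (hg : IntegrableOn g (Ioi a)) :
    IntegrableOn (fun t => ((⌊t⌋₊ : ℝ) - t + 1 / 2) * g t) (Ioi a) := by
  refine hg.bdd_mul (c := 1 / 2) (by fun_prop) ?_
  filter_upwards [ae_restrict_mem measurableSet_Ioi] with t ht
  exact abs_natFloor_sub_add_half_le (ha.trans ht.le)

theorem abs_integral_Ioi_one_natFloor_sub_add_half_mul_le {g : ℝ → ℝ} (hg : AntitoneOn g (Ici 1))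
    (hg0 : ∀ t, 1 ≤ t → 0 ≤ g t) (hgi : IntegrableOn g (Ioi 1)) :
    |∫ t in Ioi 1, ((⌊t⌋₊ : ℝ) - t + 1 / 2) * g t| ≤ g 1 / 2 := by
  have hψg := integrableOn_natFloor_sub_add_half_mul zero_le_one hgi
  have hlim := intervalIntegral_tendsto_integral_Ioi 1 hψg
    (tendsto_atTop_add_const_right _ 1 tendsto_natCast_atTop_atTop)
  refine le_of_tendsto hlim.abs (Eventually.of_forall fun N => ?_)
  have hpiece : ∀ k : ℕ, |∫ t in (k : ℝ) + 1..(k : ℝ) + 1 + 1, ((⌊t⌋₊ : ℝ) - t + 1 / 2) * g t|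
      ≤ g ((k : ℝ) + 1) / 2 - g ((k : ℝ) + 1 + 1) / 2 := fun k => by
    have h := abs_intervalIntegral_natFloor_sub_add_half_mul_le (n := k + 1) (g := g)
      (hg.mono fun t ht => ?_)
    · push_cast at h; linarith
    · exact le_trans (by simp) ht.1
  have hadj := intervalIntegral.sum_integral_adjacent_intervals (μ := volume) (n := N)
    (f := fun t => ((⌊t⌋₊ : ℝ) - t + 1 / 2) * g t) (a := fun k : ℕ => (k : ℝ) + 1) fun k _ => ?_
  · have htel := Finset.sum_range_sub' (fun k : ℕ => g ((k : ℝ) + 1) / 2) N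
    push_cast at hadj htel
    rw [zero_add] at hadj htel
    rw [← hadj]
    calc _ ≤ _ := Finset.abs_sum_le_sum_abs _ _
      _ ≤ _ := Finset.sum_le_sum fun k _ => hpiece k
      _ = g 1 / 2 - g ((N : ℝ) + 1) / 2 := htel
      _ ≤ g 1 / 2 := by linarith [hg0 ((N : ℝ) + 1) (by linarith [N.cast_nonneg (α := ℝ)])]
  · rw [intervalIntegrable_iff_integrableOn_Ioc_of_le (by push_cast; linarith)]
    exact hψg.mono_set (Ioc_subset_Ioi_self.trans (Ioi_subset_Ioi (by simp)))

theorem abs_integral_Ioi_zero_natFloor_sub_add_half_mul_le {g : ℝ → ℝ} (hg : AntitoneOn g (Ioi 0))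
    (hg0 : ∀ t, 0 < t → 0 ≤ g t) (hgi : IntegrableOn g (Ioi 0)) :
    |∫ t in Ioi 0, ((⌊t⌋₊ : ℝ) - t + 1 / 2) * g t| ≤ ∫ t in (0 : ℝ)..1, g t := by
  have hψg := integrableOn_natFloor_sub_add_half_mul le_rfl hgi
  have hgi01 : IntervalIntegrable g volume 0 1 := by
    rw [intervalIntegrable_iff_integrableOn_Ioc_of_le zero_le_one]
    exact hgi.mono_set Ioc_subset_Ioi_self
  have hhead : |∫ t in (0 : ℝ)..1, ((⌊t⌋₊ : ℝ) - t + 1 / 2) * g t|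
      ≤ ∫ t in (0 : ℝ)..1, 1 / 2 * g t := by
    refine (intervalIntegral.abs_integral_le_integral_abs zero_le_one).trans
      (intervalIntegral.integral_mono_on_of_le_Ioo zero_le_one ?_ (hgi01.const_mul _)
        fun t ht => ?_)
    · rw [intervalIntegrable_iff_integrableOn_Ioc_of_le zero_le_one]
      exact (hψg.mono_set Ioc_subset_Ioi_self).abs
    · rw [abs_mul, abs_of_nonneg (hg0 t ht.1)]
      exact mul_le_mul_of_nonneg_right (abs_natFloor_sub_add_half_le ht.1.le) (hg0 t ht.1)
  have htail := abs_integral_Ioi_one_natFloor_sub_add_half_mul_le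
    (hg.mono (Ici_subset_Ioi.2 one_pos)) (fun t ht => hg0 t (by linarith))
    (hgi.mono_set (Ioi_subset_Ioi zero_le_one))
  have hg1 : g 1 ≤ ∫ t in (0 : ℝ)..1, g t := by
    simpa using intervalIntegral.integral_mono_on_of_le_Ioo zero_le_one intervalIntegrable_const
      hgi01 fun t ht => hg ht.1 (mem_Ioi.2 one_pos) ht.2.le
  rw [← intervalIntegral.integral_interval_add_Ioi hψg (hψg.mono_set (Ioi_subset_Ioi zero_le_one))]
  rw [intervalIntegral.integral_const_mul] at hhead
  linarith [abs_add_le (∫ t in (0 : ℝ)..1, ((⌊t⌋₊ : ℝ) - t + 1 / 2) * g t)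
    (∫ t in Ioi 1, ((⌊t⌋₊ : ℝ) - t + 1 / 2) * g t)]

section tailDensity

noncomputable def tailDensity (ε t : ℝ) : ℝ :=
  ε / (2 * √(2 * π)) * (t ^ (-(1 / 2) : ℝ) * exp (-(ε ^ 2 / 2 * t)))

variable {ε : ℝ}

theorem tailDensity_nonneg (hε : 0 ≤ ε) {t : ℝ} (ht : 0 ≤ t) : 0 ≤ tailDensity ε t := by
  unfold tailDensity
  have := rpow_nonneg ht (-(1 / 2))
  positivity

theorem tailDensity_le (hε : 0 ≤ ε) {t : ℝ} (ht : 0 ≤ t) :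
    tailDensity ε t ≤ ε / (2 * √(2 * π)) * t ^ (-(1 / 2) : ℝ) := by
  unfold tailDensity
  gcongr
  refine mul_le_of_le_one_right (rpow_nonneg ht _) (exp_le_one_iff.2 ?_)
  have := mul_nonneg (sq_nonneg ε) ht
  linarith

theorem antitoneOn_tailDensity (hε : 0 ≤ ε) : AntitoneOn (tailDensity ε) (Ioi 0) := by
  intro s (hs : 0 < s) t _ hst
  unfold tailDensity
  refine mul_le_mul_of_nonneg_left (mul_le_mul (rpow_le_rpow_of_nonpos hs hst (by norm_num))
    (exp_le_exp.2 ?_) (exp_pos _).le (rpow_nonneg hs.le _)) (by positivity)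
  have := mul_le_mul_of_nonneg_left hst (sq_nonneg ε)
  linarith

theorem integrableOn_rpow_mul_tailDensity (hε : 0 < ε) {s : ℝ} (hs : -(1 / 2) < s) :
    IntegrableOn (fun t => t ^ s * tailDensity ε t) (Ioi 0) := by
  have h := integrableOn_rpow_mul_exp_neg_mul_rpow (p := 1) (s := s - 1 / 2) (by linarith) one_pos
    (show 0 < ε ^ 2 / 2 by positivity)
  refine IntegrableOn.congr_fun (h.const_mul (ε / (2 * √(2 * π)))) (fun t (ht : 0 < t) => ?_)
    measurableSet_Ioi
  simp only [tailDensity, rpow_one, neg_mul]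
  rw [sub_eq_add_neg, rpow_add ht]
  ring

theorem integral_rpow_mul_tailDensity (hε : 0 < ε) {s : ℝ} (hs : -(1 / 2) < s) :
    ∫ t in Ioi 0, t ^ s * tailDensity ε t
      = ε / (2 * √(2 * π)) * ((2 / ε ^ 2) ^ (s + 1 / 2) * Gamma (s + 1 / 2)) := by
  have h := integral_rpow_mul_exp_neg_mul_Ioi (a := s + 1 / 2) (by linarith)
    (show 0 < ε ^ 2 / 2 by positivity)
  rw [one_div_div] at h
  rw [← h, ← integral_const_mul]
  refine setIntegral_congr_fun measurableSet_Ioi fun t (ht : 0 < t) => ?_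
  simp only [tailDensity]
  rw [show s + 1 / 2 - 1 = s + -(1 / 2) by ring, rpow_add ht]
  ring

theorem integrableOn_tailDensity (hε : 0 < ε) : IntegrableOn (tailDensity ε) (Ioi 0) := by
  simpa using integrableOn_rpow_mul_tailDensity hε (s := 0) (by norm_num)

theorem integrableOn_mul_tailDensity (hε : 0 < ε) :
    IntegrableOn (fun t => t * tailDensity ε t) (Ioi 0) := by
  simpa using integrableOn_rpow_mul_tailDensity hε (s := 1) (by norm_num)

theorem integral_tailDensity (hε : 0 < ε) : ∫ t in Ioi 0, tailDensity ε t = 1 / 2 := by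
  have h := integral_rpow_mul_tailDensity hε (s := 0) (by norm_num)
  simp only [rpow_zero, one_mul, zero_add] at h
  rw [h, ← sqrt_eq_rpow, Gamma_one_half_eq, sqrt_div' _ (sq_nonneg ε), sqrt_sq hε.le,
    sqrt_mul zero_le_two]
  field_simp

theorem integral_mul_tailDensity (hε : 0 < ε) :
    ∫ t in Ioi 0, t * tailDensity ε t = 1 / (2 * ε ^ 2) := by
  have h := integral_rpow_mul_tailDensity hε (s := 1) (by norm_num)
  simp only [rpow_one] at h
  rw [h, show (1 : ℝ) + 1 / 2 = 1 / 2 + 1 by norm_num, Gamma_add_one (by norm_num),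
    rpow_add (by positivity), rpow_one, ← sqrt_eq_rpow, Gamma_one_half_eq,
    sqrt_div' _ (sq_nonneg ε), sqrt_sq hε.le, sqrt_mul zero_le_two]
  field_simp

theorem integral_Ioi_tailDensity (hε : 0 < ε) {b : ℝ} (hb : 0 < b) :
    ∫ t in Ioi b, tailDensity ε t = 1 / √(2 * π) * ∫ x in Ioi (ε * √b), exp (-x ^ 2 / 2) := by
  have hpt : ∀ t : ℝ, 0 < t →
      exp (-(ε * √t) ^ 2 / 2) * (ε * (1 / (2 * √t))) = √(2 * π) * tailDensity ε t := by
    intro t ht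
    have hst : 0 < √t := sqrt_pos.2 ht
    rw [tailDensity, mul_pow, sq_sqrt ht.le, rpow_neg ht.le, ← sqrt_eq_rpow]
    field_simp
  have hgi : Integrable fun x : ℝ => exp (-x ^ 2 / 2) := by
    simpa [neg_div, div_eq_inv_mul] using integrable_exp_neg_mul_sq (b := 1 / 2) (by norm_num)
  rw [← integral_comp_mul_deriv_Ioi (f := fun t => ε * √t) (f' := fun t => ε * (1 / (2 * √t)))
    (continuous_const.mul continuous_sqrt).continuousOn (tendsto_sqrt_atTop.const_mul_atTop hε)
    (fun t ht => ((hasDerivAt_sqrt (hb.trans ht).ne').const_mul ε).hasDerivWithinAt)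
    (by fun_prop) hgi.integrableOn ?_, ← integral_const_mul]
  · refine setIntegral_congr_fun measurableSet_Ioi fun t (ht : b < t) => ?_
    simp only [Function.comp, hpt t (hb.trans ht)]
    field_simp
  · refine IntegrableOn.congr_fun (((integrableOn_tailDensity hε).mono_set
      (Ici_subset_Ioi.2 hb)).const_mul (√(2 * π))) (fun t (ht : b ≤ t) => ?_) measurableSet_Ici
    exact (hpt t (hb.trans_le ht)).symm

theorem intervalIntegral_tailDensity_le (hε : 0 < ε) :
    ∫ t in (0 : ℝ)..1, tailDensity ε t ≤ ε / √(2 * π) := by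
  have hrpow : IntervalIntegrable (fun t : ℝ => t ^ (-(1 / 2) : ℝ)) volume 0 1 :=
    intervalIntegral.intervalIntegrable_rpow' (by norm_num)
  calc _ ≤ ∫ t in (0 : ℝ)..1, ε / (2 * √(2 * π)) * t ^ (-(1 / 2) : ℝ) := by
        refine intervalIntegral.integral_mono_on zero_le_one ?_ (hrpow.const_mul _)
          fun t ht => tailDensity_le hε.le ht.1
        rw [intervalIntegrable_iff_integrableOn_Ioc_of_le zero_le_one]
        exact (integrableOn_tailDensity hε).mono_set Ioc_subset_Ioi_self
    _ = ε / √(2 * π) := by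
        rw [intervalIntegral.integral_const_mul, integral_rpow (Or.inl (by norm_num))]
        norm_num
        ring

theorem tsum_gaussianTail_eq_integral_natFloor_mul_tailDensity (hε : 0 < ε) :
    ∑' n : ℕ, 1 / √(2 * π) * ∫ x in Ioi (ε * √((n : ℝ) + 1)), exp (-x ^ 2 / 2)
      = ∫ t in Ioi 0, (⌊t⌋₊ : ℝ) * tailDensity ε t := by
  simp_rw [← integral_Ioi_tailDensity hε (Nat.cast_add_one_pos _)]
  exact (hasSum_integral_Ioi_natCast_add_one (integrableOn_tailDensity hε)
    (integrableOn_mul_tailDensity hε)).tsum_eq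

theorem abs_tsum_gaussianTail_sub_le (hε : 0 < ε) :
    |(∑' n : ℕ, 1 / √(2 * π) * ∫ x in Ioi (ε * √((n : ℝ) + 1)), exp (-x ^ 2 / 2))
      - 1 / (2 * ε ^ 2) - (-1 / 4)| ≤ ε := by
  have hg := integrableOn_tailDensity hε
  have hψg := integrableOn_natFloor_sub_add_half_mul le_rfl hg
  have htg := integrableOn_mul_tailDensity hε
  have hdecomp : ∫ t in Ioi 0, (⌊t⌋₊ : ℝ) * tailDensity ε t
      = (∫ t in Ioi 0, ((⌊t⌋₊ : ℝ) - t + 1 / 2) * tailDensity ε t)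
        + (∫ t in Ioi 0, t * tailDensity ε t) - 1 / 2 * ∫ t in Ioi 0, tailDensity ε t := by
    rw [← integral_const_mul, ← integral_add hψg htg, ← integral_sub (f := fun t =>
      ((⌊t⌋₊ : ℝ) - t + 1 / 2) * tailDensity ε t + t * tailDensity ε t) (hψg.add htg)
      (hg.const_mul _)]
    exact setIntegral_congr_fun measurableSet_Ioi fun t _ => by ring
  rw [tsum_gaussianTail_eq_integral_natFloor_mul_tailDensity hε, hdecomp,
    integral_mul_tailDensity hε, integral_tailDensity hε]
  calc _ = |∫ t in Ioi 0, ((⌊t⌋₊ : ℝ) - t + 1 / 2) * tailDensity ε t| := by ring_nf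
    _ ≤ ∫ t in (0 : ℝ)..1, tailDensity ε t :=
      abs_integral_Ioi_zero_natFloor_sub_add_half_mul_le (antitoneOn_tailDensity hε.le)
        (fun t ht => tailDensity_nonneg hε.le ht.le) hg
    _ ≤ ε / √(2 * π) := intervalIntegral_tailDensity_le hε
    _ ≤ ε := div_le_self hε.le (one_le_sqrt.2 (by linarith [pi_gt_three]))

end tailDensity

/-- `lim_{ε ↓ 0} (G(ε) − 1/(2ε²)) = −1/4`, where
`G(ε) = ∑_{n≥1} (1/√(2π))·∫_{ε√n}^∞ e^{-x²/2} dx`. -/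
theorem limit_G_minus_half_inv_sq :
    Tendsto (fun ε : ℝ =>
        (∑' n : ℕ, (1 / Real.sqrt (2 * π)) *
          ∫ x in Ioi (ε * Real.sqrt ((n : ℝ) + 1)), Real.exp (-x ^ 2 / 2))
        - 1 / (2 * ε ^ 2))
      (nhdsWithin 0 (Ioi 0)) (nhds (-1 / 4)) := by
  rw [tendsto_iff_norm_sub_tendsto_zero]
  refine squeeze_zero' (Eventually.of_forall fun _ => norm_nonneg _) ?_
    (tendsto_nhdsWithin_of_tendsto_nhds tendsto_id)
  filter_upwards [self_mem_nhdsWithin] with ε hε using abs_tsum_gaussianTail_sub_le hε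
end

section
/- The limit as ε ↓ 0 of (F(ε) + ln ε) equals −(1/2)·ln 2, where F(ε) = ∑_{n=1}^∞ (1/n)·(1/√(2π))·∫_{ε√n}^∞ e^{-x²/2} dx. -/
/-!
For fixed `x > 0`, the indices `n ≥ 0` with `ε √(n + 1) < x` are exactly the `n < N`, where `N` is
the number of positive integers below `(x / ε)²`. Exchanging sum and integral therefore gives
`F ε = (2π)^(-1/2) ∫₀^∞ e^(-x²/2) H_N dx` with `H_N` the harmonic number. Since
`H_N = log (x / ε)² + γ + o(1)` and `∫₀^∞ e^(-x²/2) dx = √(2π) / 2`, dominated convergence, with the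
bound `|H_N + 2 log ε| ≤ 1 + 2 |log x|`, yields
`F ε + log ε → (2π)^(-1/2) ∫₀^∞ e^(-x²/2) (γ + 2 log x) dx`.
Substituting `t = x² / 2` turns this log-moment into `Γ'(1/2) = -√π (γ + 2 log 2)`; then `γ`
cancels, leaving `-(log 2) / 2`.
-/

open Real MeasureTheory Set Filter
open scoped Topology

local notation "γ" => eulerMascheroniConstant

/-- The number of positive integers `k < y`. -/
noncomputable def countBelow (y : ℝ) : ℕ := ⌈y⌉₊ - 1

lemma lt_countBelow_iff {n : ℕ} {y : ℝ} : n < countBelow y ↔ (n + 1 : ℝ) < y := by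
  rw [countBelow, Nat.lt_sub_iff_add_lt, Nat.lt_ceil]
  push_cast
  rfl

lemma le_countBelow_add_one (y : ℝ) : y ≤ countBelow y + 1 :=
  not_lt.1 (lt_countBelow_iff.not.1 (lt_irrefl _))

lemma countBelow_lt {y : ℝ} (h : 0 < countBelow y) : (countBelow y : ℝ) < y := by
  have := lt_countBelow_iff.1 (Nat.sub_one_lt h.ne')
  rwa [Nat.cast_sub (Nat.one_le_of_lt h), Nat.cast_one, sub_add_cancel] at this

lemma countBelow_eq_zero {y : ℝ} (hy : y ≤ 1) : countBelow y = 0 :=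
  Nat.eq_zero_of_not_pos fun h => (lt_countBelow_iff.1 h).not_ge (by simpa using hy)

lemma countBelow_pos_iff {y : ℝ} : 0 < countBelow y ↔ 1 < y := by
  simpa using (lt_countBelow_iff (n := 0) (y := y))

lemma measurable_countBelow : Measurable countBelow :=
  measurable_id.nat_ceil.sub_const 1

lemma tendsto_countBelow_atTop : Tendsto countBelow atTop atTop :=
  (tendsto_sub_atTop_nat 1).comp tendsto_nat_ceil_atTop

lemma harmonic_nonneg (n : ℕ) : 0 ≤ harmonic n :=
  Finset.sum_nonneg fun _ _ => by positivity

lemma log_le_harmonic_countBelow {y : ℝ} (hy : 0 < y) : log y ≤ harmonic (countBelow y) := by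
  calc log y ≤ log ↑(countBelow y + 1) := by
        gcongr
        push_cast
        exact le_countBelow_add_one y
    _ ≤ harmonic (countBelow y) := log_add_one_le_harmonic _

lemma harmonic_countBelow_le_one_add_log {y : ℝ} (hy : 1 ≤ y) :
    harmonic (countBelow y) ≤ 1 + log y := by
  refine (harmonic_le_one_add_log _).trans (add_le_add_right ?_ 1)
  rcases (countBelow y).eq_zero_or_pos with h | h
  · simpa [h] using log_nonneg hy
  · exact log_le_log (by exact_mod_cast h) (countBelow_lt h).le

lemma tendsto_harmonic_countBelow_sub_log :
    Tendsto (fun y => harmonic (countBelow y) - log y) atTop (𝓝 γ) := by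
  have hN := tendsto_countBelow_atTop
  refine tendsto_of_tendsto_of_tendsto_of_le_of_le' (tendsto_harmonic_sub_log_add_one.comp hN)
    (tendsto_harmonic_sub_log.comp hN) ?_ ?_
  all_goals
    filter_upwards [eventually_gt_atTop 1] with y hy
    simp only [Function.comp_apply, sub_le_sub_iff_left]
  · exact log_le_log (by linarith) (le_countBelow_add_one y)
  · have hN0 := countBelow_pos_iff.2 hy
    exact log_le_log (by exact_mod_cast hN0) (countBelow_lt hN0).le

lemma mul_sqrt_lt_iff_lt_countBelow {ε x : ℝ} (hε : 0 < ε) (hx : 0 < x) (n : ℕ) :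
    ε * √(n + 1) < x ↔ n < countBelow ((x / ε) ^ 2) := by
  rw [lt_countBelow_iff, ← lt_div_iff₀' hε, sqrt_lt' (div_pos hx hε)]

lemma hasSum_indicator_Ioi_mul_sqrt {ε x : ℝ} (hε : 0 < ε) (hx : 0 < x) (f : ℝ → ℝ) :
    HasSum (fun n : ℕ => (Ioi (ε * √(n + 1))).indicator (fun x => f x * ((n : ℝ) + 1)⁻¹) x)
      (f x * harmonic (countBelow ((x / ε) ^ 2))) := by
  set N := countBelow ((x / ε) ^ 2) with hN
  have hterm (n : ℕ) : (Ioi (ε * √(n + 1))).indicator (fun x => f x * ((n : ℝ) + 1)⁻¹) x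
      = if n ∈ Finset.range N then f x * ((n : ℝ) + 1)⁻¹ else 0 := by
    simp only [indicator_apply, mem_Ioi, Finset.mem_range, mul_sqrt_lt_iff_lt_countBelow hε hx, hN]
  have hvalue : f x * harmonic N
      = ∑ n ∈ Finset.range N, if n ∈ Finset.range N then f x * ((n : ℝ) + 1)⁻¹ else 0 := by
    rw [Finset.sum_congr rfl fun n hn => if_pos hn]
    push_cast [harmonic, Finset.mul_sum]
    rfl
  simp_rw [hterm, hvalue]
  exact hasSum_sum_of_ne_finset_zero fun n hn => if_neg hn

theorem tsum_mul_setIntegral_Ioi_mul_sqrt {ε : ℝ} (hε : 0 < ε) {f : ℝ → ℝ}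
    (hf : AEStronglyMeasurable f (volume.restrict (Ioi 0)))
    (hfH : IntegrableOn (fun x => f x * harmonic (countBelow ((x / ε) ^ 2))) (Ioi 0)) :
    ∑' n : ℕ, 1 / ((n : ℝ) + 1) * ∫ x in Ioi (ε * √(n + 1)), f x
      = ∫ x in Ioi 0, f x * harmonic (countBelow ((x / ε) ^ 2)) := by
  have on_Ioi {p : ℝ → Prop} (h : ∀ x, 0 < x → p x) : ∀ᵐ x ∂(volume.restrict (Ioi 0)), p x :=
    (ae_restrict_iff' measurableSet_Ioi).2 (ae_of_all _ h)
  have hsum := hasSum_integral_of_dominated_convergence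
    (F := fun n : ℕ => (Ioi (ε * √(n + 1))).indicator (fun x => f x * ((n : ℝ) + 1)⁻¹))
    (fun n : ℕ => (Ioi (ε * √(n + 1))).indicator (fun x => ‖f x‖ * ((n : ℝ) + 1)⁻¹))
    (fun n => (hf.mul_const _).indicator measurableSet_Ioi)
    (fun n => ae_of_all _ fun x => by
      simp only [norm_indicator_eq_indicator_norm, norm_mul]
      rw [Real.norm_of_nonneg (by positivity : (0:ℝ) ≤ ((n : ℝ) + 1)⁻¹)])
    (on_Ioi fun x hx => (hasSum_indicator_Ioi_mul_sqrt hε hx (fun y => ‖f y‖)).summable)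
    (hfH.norm.congr (on_Ioi fun x hx => by
      dsimp only
      rw [(hasSum_indicator_Ioi_mul_sqrt hε hx (fun y => ‖f y‖)).tsum_eq, norm_mul,
        Real.norm_of_nonneg (Rat.cast_nonneg.2 (harmonic_nonneg _))]))
    (on_Ioi fun x hx => hasSum_indicator_Ioi_mul_sqrt hε hx f)
  refine Eq.trans (tsum_congr fun n => ?_) hsum.tsum_eq
  rw [setIntegral_indicator measurableSet_Ioi, Ioi_inter_Ioi, max_eq_right (by positivity),
    integral_mul_const, mul_comm, one_div]

theorem Real.hasDerivAt_Gamma_eq_integral {s : ℝ} (hs : 0 < s) :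
    HasDerivAt Gamma (∫ t in Ioi 0, t ^ (s - 1) * (log t * exp (-t))) s := by
  have hs' : 0 < (s : ℂ).re := by simpa using hs
  have hΓ : HasDerivAt Complex.Gamma
      (∫ t : ℝ in Ioi 0, (t : ℂ) ^ ((s : ℂ) - 1) * (log t * exp (-t))) s := by
    refine (Complex.hasDerivAt_GammaIntegral hs').congr_of_eventuallyEq ?_
    filter_upwards [(isOpen_lt continuous_const Complex.continuous_re).mem_nhds hs'] with z hz
    exact Complex.Gamma_eq_integral hz
  have hcast : ∫ t : ℝ in Ioi 0, (t : ℂ) ^ ((s : ℂ) - 1) * (log t * exp (-t))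
      = ((∫ t in Ioi 0, t ^ (s - 1) * (log t * exp (-t)) : ℝ) : ℂ) := by
    rw [← integral_complex_ofReal]
    refine setIntegral_congr_fun measurableSet_Ioi fun t (ht : 0 < t) => ?_
    push_cast [Complex.ofReal_cpow ht.le]
    rfl
  rw [hcast] at hΓ
  simpa [Complex.Gamma_ofReal] using hΓ.real_of_complex

lemma integral_rpow_neg_half_mul_log_mul_exp_neg :
    ∫ t in Ioi (0 : ℝ), t ^ (-(1 / 2) : ℝ) * (log t * exp (-t)) = -√π * (γ + 2 * log 2) := by
  have h := Real.hasDerivAt_Gamma_eq_integral one_half_pos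
  norm_num at h
  exact h.unique hasDerivAt_Gamma_one_half

lemma abs_log_le_self_add_two_mul_rpow_neg_half {x : ℝ} (hx : 0 < x) :
    |log x| ≤ x + 2 * x ^ (-(1 / 2) : ℝ) := by
  have hpow : 0 < x ^ (-(1 / 2) : ℝ) := rpow_pos_of_pos hx _
  rcases le_or_gt 1 x with h | h
  · rw [abs_of_nonneg (log_nonneg h)]
    linarith [log_le_sub_one_of_pos hx]
  · -- `-log x = 2 log (x ^ (-1/2)) ≤ 2 (x ^ (-1/2) - 1)`
    have := log_le_sub_one_of_pos hpow
    rw [log_rpow hx, abs_of_neg (log_neg hx h)] at *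
    linarith

theorem integrableOn_log_mul_exp_neg_mul_sq {b : ℝ} (hb : 0 < b) :
    IntegrableOn (fun x => log x * exp (-b * x ^ 2)) (Ioi 0) := by
  have hbound : IntegrableOn
      (fun x => x ^ (1 : ℝ) * exp (-b * x ^ 2) + 2 * (x ^ (-(1 / 2) : ℝ) * exp (-b * x ^ 2)))
      (Ioi 0) :=
    (integrableOn_rpow_mul_exp_neg_mul_sq hb (by norm_num)).add
      ((integrableOn_rpow_mul_exp_neg_mul_sq hb (by norm_num)).const_mul 2)
  refine hbound.mono' (by fun_prop) ((ae_restrict_iff' measurableSet_Ioi).2 (ae_of_all _ ?_))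
  intro x (hx : 0 < x)
  rw [norm_mul, Real.norm_eq_abs, Real.norm_of_nonneg (exp_pos _).le, rpow_one]
  nlinarith [abs_log_le_self_add_two_mul_rpow_neg_half hx, exp_pos (-b * x ^ 2)]

lemma integral_log_mul_exp_neg_sq :
    ∫ x in Ioi (0 : ℝ), log x * exp (-x ^ 2) = -(√π / 4) * (γ + 2 * log 2) := by
  have h := integral_comp_rpow_Ioi_of_pos (p := 2) two_pos
    (g := fun t => t ^ (-(1 / 2) : ℝ) * (log t * exp (-t)))
  rw [integral_rpow_neg_half_mul_log_mul_exp_neg] at h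
  have hsubst : EqOn (fun x : ℝ => (2 * x ^ ((2 : ℝ) - 1)) •
        ((x ^ (2 : ℝ)) ^ (-(1 / 2) : ℝ) * (log (x ^ (2 : ℝ)) * exp (-x ^ (2 : ℝ)))))
      (fun x => 4 * (log x * exp (-x ^ 2))) (Ioi 0) := fun x (hx : 0 < x) => by
    dsimp only
    rw [← rpow_mul hx.le, log_rpow hx, rpow_two, smul_eq_mul]
    norm_num [rpow_neg_one]
    field_simp
    ring
  rw [setIntegral_congr_fun measurableSet_Ioi hsubst, integral_const_mul] at h
  linarith

theorem integral_log_mul_exp_neg_mul_sq {b : ℝ} (hb : 0 < b) :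
    ∫ x in Ioi (0 : ℝ), log x * exp (-b * x ^ 2) = -(√(π / b) / 4) * (γ + 2 * log 2 + log b) := by
  have hsb : 0 < √b := sqrt_pos.2 hb
  have h := integral_comp_mul_left_Ioi (fun y => log y * exp (-y ^ 2)) 0 hsb
  have hsplit : EqOn (fun x => log (√b * x) * exp (-(√b * x) ^ 2))
      (fun x => log √b * exp (-b * x ^ 2) + log x * exp (-b * x ^ 2)) (Ioi 0) :=
    fun x (hx : 0 < x) => by
      dsimp only
      rw [log_mul hsb.ne' hx.ne', mul_pow, sq_sqrt hb.le]
      ring_nf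
  rw [setIntegral_congr_fun measurableSet_Ioi hsplit,
    integral_add ((integrable_exp_neg_mul_sq hb).integrableOn.const_mul _)
      (integrableOn_log_mul_exp_neg_mul_sq hb),
    integral_const_mul, integral_gaussian_Ioi, mul_zero, integral_log_mul_exp_neg_sq,
    smul_eq_mul] at h
  rw [log_sqrt hb.le, sqrt_div' _ hb.le] at *
  field_simp at h ⊢
  linear_combination h / 4

lemma log_div_sq {x ε : ℝ} (hx : 0 < x) (hε : 0 < ε) :
    log ((x / ε) ^ 2) = 2 * log x - 2 * log ε := by
  rw [log_pow, log_div hx.ne' hε.ne']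
  push_cast
  ring

lemma abs_harmonic_countBelow_add_two_mul_log_le {ε x : ℝ} (hε : 0 < ε) (hε1 : ε ≤ 1)
    (hx : 0 < x) : |(harmonic (countBelow ((x / ε) ^ 2)) : ℝ) + 2 * log ε| ≤ 1 + 2 * |log x| := by
  have hlower := log_le_harmonic_countBelow (pow_pos (div_pos hx hε) 2)
  rw [log_div_sq hx hε] at hlower
  rw [abs_le]
  constructor
  · linarith [neg_abs_le (log x)]
  rcases le_or_gt x ε with hxε | hεx
  · have hy : (x / ε) ^ 2 ≤ 1 := pow_le_one₀ (div_nonneg hx.le hε.le) ((div_le_one hε).2 hxε)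
    rw [countBelow_eq_zero hy, harmonic_zero, Rat.cast_zero]
    linarith [log_le_log hx hxε, log_nonpos hε.le hε1, neg_abs_le (log x)]
  · have hy : 1 ≤ (x / ε) ^ 2 := one_le_pow₀ ((one_le_div hε).2 hεx.le)
    have hupper := harmonic_countBelow_le_one_add_log hy
    rw [log_div_sq hx hε] at hupper
    linarith [le_abs_self (log x)]

lemma tendsto_harmonic_countBelow_add_two_mul_log {x : ℝ} (hx : 0 < x) :
    Tendsto (fun ε => (harmonic (countBelow ((x / ε) ^ 2)) : ℝ) + 2 * log ε) (𝓝[>] 0)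
      (𝓝 (γ + 2 * log x)) := by
  have hdiv : Tendsto (fun ε => x / ε) (𝓝[>] 0) atTop := by
    simpa only [div_eq_mul_inv] using tendsto_inv_nhdsGT_zero.const_mul_atTop hx
  have hy : Tendsto (fun ε => (x / ε) ^ 2) (𝓝[>] 0) atTop :=
    (tendsto_pow_atTop two_ne_zero).comp hdiv
  refine ((tendsto_harmonic_countBelow_sub_log.comp hy).add_const (2 * log x)).congr' ?_
  filter_upwards [self_mem_nhdsWithin] with ε (hε : 0 < ε)
  simp only [Function.comp_apply, log_div_sq hx hε]
  ring

lemma measurable_harmonic_countBelow_div_sq (ε : ℝ) :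
    Measurable fun x : ℝ => (harmonic (countBelow ((x / ε) ^ 2)) : ℝ) :=
  (measurable_from_nat (f := fun n => (harmonic n : ℝ))).comp
    (measurable_countBelow.comp ((measurable_id.div_const ε).pow_const 2))

lemma norm_exp_neg_mul_sq_mul_harmonic_countBelow_add_le {b ε x : ℝ} (hε : 0 < ε) (hε1 : ε ≤ 1)
    (hx : 0 < x) :
    ‖exp (-b * x ^ 2) * ((harmonic (countBelow ((x / ε) ^ 2)) : ℝ) + 2 * log ε)‖
      ≤ exp (-b * x ^ 2) + 2 * ‖log x * exp (-b * x ^ 2)‖ := by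
  simp only [norm_mul, Real.norm_eq_abs, abs_of_pos (exp_pos _)]
  nlinarith [abs_harmonic_countBelow_add_two_mul_log_le hε hε1 hx, exp_pos (-b * x ^ 2)]

lemma aestronglyMeasurable_exp_neg_mul_sq_mul_harmonic_countBelow_add (b ε c : ℝ)
    {μ : Measure ℝ} :
    AEStronglyMeasurable
      (fun x => exp (-b * x ^ 2) * ((harmonic (countBelow ((x / ε) ^ 2)) : ℝ) + c)) μ :=
  ((by fun_prop : Measurable fun x : ℝ => exp (-b * x ^ 2)).mul
    ((measurable_harmonic_countBelow_div_sq ε).add_const c)).aestronglyMeasurable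

theorem tendsto_integral_exp_neg_mul_sq_mul_harmonic_countBelow {b : ℝ} (hb : 0 < b) :
    Tendsto (fun ε => ∫ x in Ioi 0,
        exp (-b * x ^ 2) * ((harmonic (countBelow ((x / ε) ^ 2)) : ℝ) + 2 * log ε)) (𝓝[>] 0)
      (𝓝 (∫ x in Ioi 0, exp (-b * x ^ 2) * (γ + 2 * log x))) := by
  refine tendsto_integral_filter_of_dominated_convergence
    (fun x => exp (-b * x ^ 2) + 2 * ‖log x * exp (-b * x ^ 2)‖)
    (Eventually.of_forall fun ε =>
      aestronglyMeasurable_exp_neg_mul_sq_mul_harmonic_countBelow_add b ε _) ?_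
    ((integrable_exp_neg_mul_sq hb).integrableOn.add
      ((integrableOn_log_mul_exp_neg_mul_sq hb).norm.const_mul 2))
    ((ae_restrict_iff' measurableSet_Ioi).2 (ae_of_all _ fun x hx =>
      (tendsto_harmonic_countBelow_add_two_mul_log hx).const_mul _))
  filter_upwards [Ioc_mem_nhdsGT one_pos] with ε ⟨hε, hε1⟩
  exact (ae_restrict_iff' measurableSet_Ioi).2 (ae_of_all _ fun x hx =>
    norm_exp_neg_mul_sq_mul_harmonic_countBelow_add_le hε hε1 hx)

lemma integrableOn_exp_neg_mul_sq_mul_harmonic_countBelow {b ε : ℝ} (hb : 0 < b) (hε : 0 < ε)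
    (hε1 : ε ≤ 1) :
    IntegrableOn (fun x => exp (-b * x ^ 2) * (harmonic (countBelow ((x / ε) ^ 2)) : ℝ))
      (Ioi 0) := by
  have hshifted : IntegrableOn
      (fun x => exp (-b * x ^ 2) * ((harmonic (countBelow ((x / ε) ^ 2)) : ℝ) + 2 * log ε))
      (Ioi 0) :=
    ((integrable_exp_neg_mul_sq hb).integrableOn.add
      ((integrableOn_log_mul_exp_neg_mul_sq hb).norm.const_mul 2)).mono'
      (aestronglyMeasurable_exp_neg_mul_sq_mul_harmonic_countBelow_add b ε _)
      ((ae_restrict_iff' measurableSet_Ioi).2 (ae_of_all _ fun x hx =>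
        norm_exp_neg_mul_sq_mul_harmonic_countBelow_add_le hε hε1 hx))
  refine (hshifted.sub ((integrable_exp_neg_mul_sq hb).integrableOn.const_mul (2 * log ε)))
    |>.congr_fun (fun x _ => by simp only [Pi.sub_apply]; ring) measurableSet_Ioi

lemma tsum_mul_setIntegral_exp_neg_mul_sq_add_log {b ε : ℝ} (hb : 0 < b) (hε : 0 < ε)
    (hε1 : ε ≤ 1) :
    (∑' n : ℕ, 1 / ((n : ℝ) + 1) * ∫ x in Ioi (ε * √(n + 1)), exp (-b * x ^ 2))
        + √(π / b) * log ε
      = ∫ x in Ioi 0,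
          exp (-b * x ^ 2) * ((harmonic (countBelow ((x / ε) ^ 2)) : ℝ) + 2 * log ε) := by
  have hH := integrableOn_exp_neg_mul_sq_mul_harmonic_countBelow hb hε hε1
  simp_rw [mul_add]
  rw [tsum_mul_setIntegral_Ioi_mul_sqrt hε (by fun_prop) hH,
    integral_add hH ((integrable_exp_neg_mul_sq hb).integrableOn.mul_const _),
    integral_mul_const, integral_gaussian_Ioi]
  ring

lemma integral_exp_neg_mul_sq_mul_eulerMascheroni_add_two_mul_log {b : ℝ} (hb : 0 < b) :
    ∫ x in Ioi 0, exp (-b * x ^ 2) * (γ + 2 * log x) = -(√(π / b) / 2) * (2 * log 2 + log b) := by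
  simp_rw [mul_add, mul_left_comm (exp _) (2 : ℝ), mul_comm (exp _) (log _)]
  rw [integral_add ((integrable_exp_neg_mul_sq hb).integrableOn.mul_const _)
      ((integrableOn_log_mul_exp_neg_mul_sq hb).const_mul 2),
    integral_mul_const, integral_const_mul, integral_gaussian_Ioi,
    integral_log_mul_exp_neg_mul_sq hb]
  ring

/-- `lim_{ε ↓ 0} (F(ε) + ln ε) = −(1/2)·ln 2`, where
`F(ε) = ∑_{n≥1} (1/n)·(1/√(2π))·∫_{ε√n}^∞ e^{-x²/2} dx`. -/
theorem limit_F_plus_log :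
    Tendsto (fun ε : ℝ =>
        (∑' n : ℕ, (1 / ((n : ℝ) + 1)) * ((1 / Real.sqrt (2 * π)) *
          ∫ x in Ioi (ε * Real.sqrt ((n : ℝ) + 1)), Real.exp (-x ^ 2 / 2)))
        + Real.log ε)
      (nhdsWithin 0 (Ioi 0)) (nhds (-(1 / 2) * Real.log 2)) := by
  simp_rw [show ∀ x : ℝ, -x ^ 2 / 2 = -(1 / 2) * x ^ 2 by intro x; ring]
  have hπ : √(π / (1 / 2)) = √(2 * π) := by congr 1; ring
  have hc : 1 / √(2 * π) * √(2 * π) = 1 := one_div_mul_cancel (by positivity)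
  have hlim := (tendsto_integral_exp_neg_mul_sq_mul_harmonic_countBelow one_half_pos).const_mul
    (1 / √(2 * π))
  rw [integral_exp_neg_mul_sq_mul_eulerMascheroni_add_two_mul_log one_half_pos, hπ] at hlim
  convert hlim.congr' ?_ using 2
  · rw [one_div 2, log_inv]
    linear_combination (log 2 / 2) * hc
  · filter_upwards [Ioc_mem_nhdsGT one_pos] with ε ⟨hε, hε1⟩
    simp_rw [mul_left_comm _ (1 / √(2 * π)), tsum_mul_left]
    rw [← tsum_mul_setIntegral_exp_neg_mul_sq_add_log one_half_pos hε hε1, hπ]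
    linear_combination log ε * hc
end

section
/- For r → ∞, the coefficient bound |ζ(1/2 − r)·(β²/2)^r/(√(2π)·r!)| ~ (1/(π·√(2r+1)))·(β²/(4π))^r holds; in particular the series ∑_{r=0}^∞ ζ(1/2 − r)·(−β²/2)^r/r! converges absolutely for |β| < 2√π and diverges for |β| > 2√π. -/
/-!
At `s = r + 1/2` the functional equation has `|cos (π s / 2)| = 1 / √2`, so
`|ζ(1/2 - r)| = √2 Γ(r + 1/2) |ζ(r + 1/2)| / (2π)^(r + 1/2)`. Substituting this, the powers
of `β` and `2π` cancel and the coefficient ratio becomes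
`|ζ(r + 1/2)| · Γ(r + 1/2) √(r + 1/2) / r!`.
The first factor tends to `1` by dominated convergence in the Dirichlet series, the second by
Legendre's duplication formula and Stirling's formula. Hence the coefficients are asymptotic to
`q^r / (π √(2r + 1))` with `q = β² / (4π)`, and these are summable exactly when `q < 1`.
-/

open Real Filter Topology
open scoped Nat

lemma norm_one_div_natCast_add_one_cpow (n : ℕ) (s : ℂ) :
    ‖1 / ((n : ℂ) + 1) ^ s‖ = 1 / ((n : ℝ) + 1) ^ s.re := by
  rw [norm_div, norm_one, ← Nat.cast_add_one, Complex.norm_natCast_cpow_of_pos n.succ_pos]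
  push_cast
  rfl

lemma tendsto_riemannZeta_ofReal_atTop :
    Tendsto (fun σ : ℝ => riemannZeta σ) atTop (𝓝 1) := by
  have hsum : Summable (fun n : ℕ => 1 / ((n : ℝ) + 1) ^ (2 : ℝ)) := by
    simpa using (summable_nat_add_iff 1).mpr (Real.summable_one_div_nat_rpow.mpr one_lt_two)
  have hlim : Tendsto (fun σ : ℝ => ∑' n : ℕ, 1 / ((n : ℂ) + 1) ^ (σ : ℂ)) atTop
      (𝓝 (∑' n : ℕ, if n = 0 then 1 else 0)) := by
    refine tendsto_tsum_of_dominated_convergence hsum (fun n => ?_) ?_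
    · rcases Nat.eq_zero_or_pos n with rfl | hn
      · simp
      · simp only [hn.ne', if_false]
        rw [tendsto_zero_iff_norm_tendsto_zero]
        simp_rw [norm_one_div_natCast_add_one_cpow, Complex.ofReal_re, one_div]
        exact tendsto_inv_atTop_zero.comp
          (tendsto_rpow_atTop_of_base_gt_one _ (by norm_cast; omega))
    · filter_upwards [eventually_ge_atTop 2] with σ hσ n
      rw [norm_one_div_natCast_add_one_cpow, Complex.ofReal_re]
      gcongr
      norm_cast
      omega
  rw [tsum_ite_eq] at hlim
  refine hlim.congr' ?_
  filter_upwards [eventually_gt_atTop 1] with σ hσ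
  exact (zeta_eq_tsum_one_div_nat_add_one_cpow (by simpa using hσ)).symm

lemma re_riemannZeta_one_sub_ofReal {σ : ℝ} (hσ : 0 < σ) (h1 : σ ≠ 1) :
    (riemannZeta (1 - σ)).re =
      2 * (2 * π) ^ (-σ) * Gamma σ * cos (π * σ / 2) * (riemannZeta σ).re := by
  have hn (n : ℕ) : (σ : ℂ) ≠ -n := fun h => by
    have := congrArg Complex.re h
    simp only [Complex.ofReal_re, Complex.neg_re, Complex.natCast_re] at this
    linarith [n.cast_nonneg (α := ℝ)]
  have hfactor :
      (2 : ℂ) * (2 * π) ^ (-(σ : ℂ)) * Complex.Gamma σ * Complex.cos (π * σ / 2) =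
        ((2 * (2 * π) ^ (-σ) * Gamma σ * cos (π * σ / 2) : ℝ) : ℂ) := by
    push_cast
    rw [Complex.ofReal_cpow (by positivity), Complex.Gamma_ofReal]
    push_cast
    ring_nf
  rw [riemannZeta_one_sub hn (mod_cast h1), hfactor, Complex.re_ofReal_mul]

lemma abs_cos_pi_mul_nat_add_half_div_two (r : ℕ) : |cos (π * (r + 1 / 2) / 2)| = √2 / 2 := by
  have hsq : cos (π * (r + 1 / 2) / 2) ^ 2 = (√2 / 2) ^ 2 := by
    rw [cos_sq, div_pow, sq_sqrt zero_le_two,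
      show 2 * (π * (r + 1 / 2) / 2) = r * π + π / 2 by ring, cos_add_pi_div_two, sin_nat_mul_pi]
    norm_num
  rw [← abs_of_nonneg (by positivity : 0 ≤ √2 / 2)]
  exact (sq_eq_sq_iff_abs_eq_abs _ _).mp hsq

lemma abs_re_riemannZeta_half_sub_nat (r : ℕ) :
    |(riemannZeta (1 / 2 - r)).re| =
      √2 * Gamma (r + 1 / 2) * |(riemannZeta ((r : ℝ) + 1 / 2 : ℝ)).re| /
        (2 * π) ^ ((r : ℝ) + 1 / 2) := by
  have hσ : (r : ℝ) + 1 / 2 ≠ 1 := fun h => by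
    have : ((2 * r + 1 : ℕ) : ℝ) = (2 : ℕ) := by push_cast; linarith
    exact absurd (Nat.cast_injective this) (by omega)
  have h := re_riemannZeta_one_sub_ofReal (by positivity) hσ
  rw [show (1 : ℂ) - ((r + 1 / 2 : ℝ) : ℂ) = 1 / 2 - r by push_cast; ring] at h
  rw [h, abs_mul, abs_mul, abs_mul, abs_cos_pi_mul_nat_add_half_div_two,
    abs_of_pos (Gamma_pos_of_pos (by positivity)),
    abs_of_pos (by positivity : (0 : ℝ) < 2 * (2 * π) ^ (-((r : ℝ) + 1 / 2))),
    rpow_neg (by positivity)]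
  field_simp

lemma Gamma_nat_add_half_eq_factorial (r : ℕ) :
    Gamma (r + 1 / 2) = (2 * r)! * √π / (4 ^ r * r !) := by
  have h := Gamma_mul_Gamma_add_half (r + 1 / 2)
  rw [show (r : ℝ) + 1 / 2 + 1 / 2 = (r : ℕ) + 1 by ring,
    show 2 * ((r : ℝ) + 1 / 2) = (2 * r : ℕ) + 1 by push_cast; ring,
    Gamma_nat_eq_factorial, Gamma_nat_eq_factorial,
    show (1 : ℝ) - ((2 * r : ℕ) + 1) = -(2 * r : ℕ) by ring,
    rpow_neg zero_le_two, rpow_natCast, pow_mul] at h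
  rw [eq_div_iff (by positivity), mul_left_comm, h]
  norm_num
  field_simp

lemma stirlingSeq_two_mul_div_sq {r : ℕ} (hr : r ≠ 0) :
    Stirling.stirlingSeq (2 * r) / Stirling.stirlingSeq r ^ 2 =
      (2 * r)! * √r / (4 ^ r * (r ! : ℝ) ^ 2) := by
  have hr' : (0 : ℝ) < r := by positivity
  have hsqrt : √(2 * ((2 * r : ℕ) : ℝ)) = 2 * √r := by
    rw [show 2 * ((2 * r : ℕ) : ℝ) = 2 ^ 2 * r by push_cast; ring, sqrt_mul (by positivity),
      sqrt_sq zero_le_two]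
  simp only [Stirling.stirlingSeq]
  rw [show ((2 * r : ℕ) : ℝ) / rexp 1 = 2 * (r / rexp 1) by push_cast; ring, mul_pow, pow_mul,
    pow_mul, hsqrt]
  field_simp
  rw [sq_sqrt (by positivity), sq_sqrt hr'.le]
  ring

lemma tendsto_Gamma_nat_add_half_mul_sqrt_div_factorial :
    Tendsto (fun r : ℕ => Gamma (r + 1 / 2) * √(r + 1 / 2) / r !) atTop (𝓝 1) := by
  have hstirling : Tendsto
      (fun r : ℕ => Stirling.stirlingSeq (2 * r) / Stirling.stirlingSeq r ^ 2) atTop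
      (𝓝 (√π / √π ^ 2)) :=
    (Stirling.tendsto_stirlingSeq_sqrt_pi.comp (tendsto_id.const_mul_atTop' two_pos)).div
      (Stirling.tendsto_stirlingSeq_sqrt_pi.pow 2) (by positivity)
  have hsqrt : Tendsto (fun r : ℕ => √((r + 1 / 2) / r)) atTop (𝓝 1) := by
    simpa using ((tendsto_natCast_div_add_atTop (1 / 2 : ℝ)).inv₀ one_ne_zero).sqrt
  have h := (hstirling.const_mul √π).mul hsqrt
  rw [sq_sqrt pi_pos.le, ← mul_div_assoc, mul_self_sqrt pi_pos.le, div_self pi_pos.ne',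
    mul_one] at h
  refine h.congr' ?_
  filter_upwards [eventually_ne_atTop 0] with r hr
  have hr' : (0 : ℝ) < r := by positivity
  rw [stirlingSeq_two_mul_div_sq hr, sqrt_div' _ hr'.le, Gamma_nat_add_half_eq_factorial]
  field_simp

lemma summable_pow_div_sqrt_iff {q : ℝ} (hq : 0 ≤ q) :
    Summable (fun r : ℕ => q ^ r / √(2 * r + 1)) ↔ q < 1 := by
  refine ⟨fun h => ?_, fun hq1 => ?_⟩
  · by_contra! hq1
    refine (Real.summable_one_div_nat_add_rpow (1 / 2) (1 / 2)).not.mpr (by norm_num) ?_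
    refine (h.mul_left √2).of_nonneg_of_le (fun r => by positivity) (fun r => ?_)
    rw [abs_of_pos (by positivity), ← sqrt_eq_rpow,
      show (2 : ℝ) * r + 1 = 2 * (r + 1 / 2) by ring, sqrt_mul zero_le_two, ← mul_div_assoc,
      mul_div_mul_left _ _ (by positivity)]
    gcongr
    exact one_le_pow₀ hq1
  · refine (summable_geometric_of_lt_one hq hq1).of_nonneg_of_le (fun r => by positivity)
      (fun r => div_le_self (by positivity) (one_le_sqrt.mpr ?_))
    linarith [r.cast_nonneg (α := ℝ)]

section Coefficients

variable {β : ℝ}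

lemma zeta_coefficient_ratio_eq (hβ : β ≠ 0) (r : ℕ) :
    (|(riemannZeta (1 / 2 - (r : ℂ))).re| * (β ^ 2 / 2) ^ r / (√(2 * π) * r !))
        / ((1 / (π * √(2 * (r : ℝ) + 1))) * (β ^ 2 / (4 * π)) ^ r) =
      |(riemannZeta ((r : ℝ) + 1 / 2 : ℝ)).re| *
        (Gamma (r + 1 / 2) * √(r + 1 / 2) / r !) := by
  rw [abs_re_riemannZeta_half_sub_nat, rpow_add (by positivity), rpow_natCast, ← sqrt_eq_rpow,
    show (2 : ℝ) * r + 1 = 2 * (r + 1 / 2) by ring, sqrt_mul zero_le_two, sqrt_mul zero_le_two,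
    show β ^ 2 / 2 = 2 * π * (β ^ 2 / (4 * π)) by field_simp; ring, mul_pow (2 * π)]
  have hQ : 0 < (β ^ 2 / (4 * π)) ^ r := by positivity
  generalize (β ^ 2 / (4 * π)) ^ r = Q at hQ ⊢
  field_simp
  rw [sq_sqrt pi_pos.le]

lemma tendsto_zeta_coefficient_ratio (hβ : β ≠ 0) :
    Tendsto (fun r : ℕ =>
        (|(riemannZeta (1 / 2 - (r : ℂ))).re| * (β ^ 2 / 2) ^ r / (√(2 * π) * r !))
          / ((1 / (π * √(2 * (r : ℝ) + 1))) * (β ^ 2 / (4 * π)) ^ r)) atTop (𝓝 1) := by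
  simp_rw [zeta_coefficient_ratio_eq hβ]
  have hzeta := tendsto_riemannZeta_ofReal_atTop.comp
    (tendsto_natCast_atTop_atTop.atTop_add (tendsto_const_nhds (x := (1 / 2 : ℝ))))
  simpa using ((Complex.continuous_re.tendsto 1).comp hzeta).abs.mul
    tendsto_Gamma_nat_add_half_mul_sqrt_div_factorial

lemma summable_zeta_coefficients_iff (hβ : β ≠ 0) :
    Summable (fun r : ℕ => (riemannZeta (1 / 2 - (r : ℂ))).re * (-β ^ 2 / 2) ^ r / r !) ↔
      |β| < 2 * √π := by
  have habs :
      (fun r : ℕ => |(riemannZeta (1 / 2 - (r : ℂ))).re * (-β ^ 2 / 2) ^ r / r.factorial|) =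
        fun r : ℕ => √(2 * π) *
          (|(riemannZeta (1 / 2 - (r : ℂ))).re| * (β ^ 2 / 2) ^ r / (√(2 * π) * r !)) := by
    ext r
    rw [abs_div, abs_mul, abs_pow, abs_div, abs_neg, abs_two, abs_of_nonneg (sq_nonneg β),
      Nat.abs_cast]
    field_simp
  have hcomparison :
      (fun r : ℕ => (1 / (π * √(2 * (r : ℝ) + 1))) * (β ^ 2 / (4 * π)) ^ r) =
        fun r : ℕ => π⁻¹ * ((β ^ 2 / (4 * π)) ^ r / √(2 * r + 1)) := by
    ext r
    field_simp
  have hq : β ^ 2 / (4 * π) < 1 ↔ |β| < 2 * √π := by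
    rw [div_lt_one (by positivity), ← sq_abs,
      show 4 * π = (2 * √π) ^ 2 by rw [mul_pow, sq_sqrt pi_pos.le]; ring]
    exact pow_lt_pow_iff_left₀ (abs_nonneg β) (by positivity) two_ne_zero
  rw [← summable_abs_iff, habs, summable_mul_left_iff (by positivity),
    (Asymptotics.isEquivalent_of_tendsto_one (tendsto_zeta_coefficient_ratio hβ)).summable_iff_nat,
    hcomparison, summable_mul_left_iff (by positivity), summable_pow_div_sqrt_iff (by positivity),
    hq]

end Coefficients

/-- For `β ≠ 0`, the coefficient asymptotics
`|ζ(1/2 − r)·(β²/2)^r/(√(2π)·r!)| ~ (1/(π√(2r+1)))·(β²/(4π))^r` as `r → ∞`;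
consequently the series `∑ ζ(1/2 − r)(−β²/2)^r/r!` converges absolutely for
`|β| < 2√π` and diverges for `|β| > 2√π`. -/
theorem zeta_coefficient_asymptotics (β : ℝ) (hβ : β ≠ 0) :
    Tendsto (fun r : ℕ =>
        (|(riemannZeta (1 / 2 - (r : ℂ))).re| * (β ^ 2 / 2) ^ r / (Real.sqrt (2 * π) * r.factorial))
          / ((1 / (π * Real.sqrt (2 * (r : ℝ) + 1))) * (β ^ 2 / (4 * π)) ^ r))
      atTop (nhds 1) ∧
    (|β| < 2 * Real.sqrt π →
      Summable (fun r : ℕ =>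
        |(riemannZeta (1 / 2 - (r : ℂ))).re * (-β ^ 2 / 2) ^ r / r.factorial|)) ∧
    (2 * Real.sqrt π < |β| →
      ¬ Summable (fun r : ℕ =>
        (riemannZeta (1 / 2 - (r : ℂ))).re * (-β ^ 2 / 2) ^ r / r.factorial)) :=
  ⟨tendsto_zeta_coefficient_ratio hβ,
    fun h => summable_abs_iff.mpr ((summable_zeta_coefficients_iff hβ).mpr h),
    fun h hsum => h.not_gt ((summable_zeta_coefficients_iff hβ).mp hsum)⟩
end

section
/- The series (2π)^{-1/2}·∑_{n=1}^∞ [√n·(√n + √(n−1))²]^{-1} converges and equals −ζ(1/2)/√(2π), where ζ is the analytically continued Riemann zeta function. -/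
/-!
Since `1 / (√(n+1) (√(n+1) + √n)²) = 2√(n+1) - 2√n - 1/√(n+1)`, the `N`-th partial sum of the
series is `2√N - ∑_{k ≤ N} k^{-1/2}`, which tends to `-ζ(1/2)` by the classical formula
`ζ(s) = lim_N (∑_{k ≤ N} k^{-s} - N^{1-s}/(1-s))`, valid for `0 < Re s`, `s ≠ 1`.

That formula comes from the series `∑ₙ (1-s)(n+1)^{-s} + (n+1)^{1-s} - (n+2)^{1-s}`: by Taylor's
theorem its terms are `O(|s(1-s)| n^{-Re s-1})`, so it is holomorphic on `Re s > 0`. It equals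
`(1-s)ζ(s) + 1` for `Re s > 1`, and the factor `1 - s` cancels the pole, so the identity theorem
on the half-plane identifies it with `(1-s) ζ₀(s)`, where `ζ₀(s) = ζ(s) - 1/(s-1)` is entire.
-/

open Real Filter Topology

lemma hasDerivAt_ofReal_cpow_of_pos {x : ℝ} (hx : 0 < x) (c : ℂ) :
    HasDerivAt (fun y : ℝ => (y : ℂ) ^ c) (c * (x : ℂ) ^ (c - 1)) x := by
  simpa using ((hasDerivAt_id (x : ℂ)).cpow_const (Complex.ofReal_mem_slitPlane.2 hx)).comp_ofReal

lemma norm_ofReal_cpow_sub_ofReal_cpow_le {a x : ℝ} (ha : 0 < a) (hax : a ≤ x) {c : ℂ}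
    (hc : c.re ≤ 1) : ‖(x : ℂ) ^ c - (a : ℂ) ^ c‖ ≤ ‖c‖ * a ^ (c.re - 1) * (x - a) := by
  refine norm_image_sub_le_of_norm_deriv_le_segment'
    (fun u hu => (hasDerivAt_ofReal_cpow_of_pos (ha.trans_le hu.1) c).hasDerivWithinAt)
    (fun u hu => ?_) x ⟨hax, le_rfl⟩
  rw [norm_mul, Complex.norm_cpow_eq_rpow_re_of_pos (ha.trans_le hu.1), Complex.sub_re,
    Complex.one_re]
  exact mul_le_mul_of_nonneg_left (Real.rpow_le_rpow_of_nonpos ha hu.1 (by linarith))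
    (norm_nonneg c)

lemma norm_ofReal_cpow_sub_sub_mul_le {a b : ℝ} (ha : 0 < a) (hab : a ≤ b) {c : ℂ}
    (hc : c.re ≤ 2) :
    ‖(b : ℂ) ^ c - (a : ℂ) ^ c - c * (a : ℂ) ^ (c - 1) * (b - a)‖
      ≤ ‖c‖ * ‖c - 1‖ * a ^ (c.re - 2) * (b - a) ^ 2 := by
  set C := ‖c‖ * ‖c - 1‖ * a ^ (c.re - 2) * (b - a)
  have hderiv : ∀ u ∈ Set.Icc a b,
      HasDerivWithinAt (fun y : ℝ => (y : ℂ) ^ c - c * (a : ℂ) ^ (c - 1) * y)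
        (c * (u : ℂ) ^ (c - 1) - c * (a : ℂ) ^ (c - 1)) (Set.Icc a b) u := fun u hu =>
    ((hasDerivAt_ofReal_cpow_of_pos (ha.trans_le hu.1) c).sub
      ((Complex.ofRealCLM.hasDerivAt (x := u)).const_mul (c * (a : ℂ) ^ (c - 1))
        |>.congr_deriv (by simp))).hasDerivWithinAt
  have hbound : ∀ u ∈ Set.Ico a b, ‖c * (u : ℂ) ^ (c - 1) - c * (a : ℂ) ^ (c - 1)‖ ≤ C := by
    intro u hu
    have h := norm_ofReal_cpow_sub_ofReal_cpow_le ha hu.1 (c := c - 1)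
      (by rw [Complex.sub_re, Complex.one_re]; linarith)
    rw [Complex.sub_re, Complex.one_re, sub_sub, one_add_one_eq_two] at h
    rw [← mul_sub, norm_mul]
    calc ‖c‖ * ‖(u : ℂ) ^ (c - 1) - (a : ℂ) ^ (c - 1)‖
        ≤ ‖c‖ * (‖c - 1‖ * a ^ (c.re - 2) * (u - a)) := by gcongr
      _ ≤ C := by
        rw [← mul_assoc, ← mul_assoc]
        exact mul_le_mul_of_nonneg_left (by linarith [hu.2]) (by positivity)
  calc _ = ‖((b : ℂ) ^ c - c * (a : ℂ) ^ (c - 1) * b)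
          - ((a : ℂ) ^ c - c * (a : ℂ) ^ (c - 1) * a)‖ := by congr 1; ring
    _ ≤ C * (b - a) := norm_image_sub_le_of_norm_deriv_le_segment' hderiv hbound b ⟨hab, le_rfl⟩
    _ = _ := by ring

/-- Minus the remainder of the first-order Taylor expansion of `x ↦ x^{1-s}` at `n + 1`,
evaluated at `n + 2`. -/
noncomputable def zetaDefect (s : ℂ) (n : ℕ) : ℂ :=
  (1 - s) * ((n : ℂ) + 1) ^ (-s) + ((n : ℂ) + 1) ^ (1 - s) - ((n : ℂ) + 2) ^ (1 - s)

lemma norm_zetaDefect_le {s : ℂ} (hs : -1 ≤ s.re) (n : ℕ) :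
    ‖zetaDefect s n‖ ≤ ‖1 - s‖ * ‖s‖ * ((n : ℝ) + 1) ^ (-s.re - 1) := by
  have h := norm_ofReal_cpow_sub_sub_mul_le (a := (n : ℝ) + 1) (b := (n : ℝ) + 2)
    (by positivity) (by linarith) (c := 1 - s) (by rw [Complex.sub_re, Complex.one_re]; linarith)
  have hre : (1 - s).re - 2 = -s.re - 1 := by rw [Complex.sub_re, Complex.one_re]; ring
  rw [hre, show (n : ℝ) + 2 - (n + 1) = 1 by ring, one_pow, mul_one, sub_sub_cancel_left,
    norm_neg] at h
  convert h using 1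
  rw [← norm_neg]
  congr 1
  simp only [zetaDefect]
  push_cast
  ring

lemma sum_range_zetaDefect (s : ℂ) (N : ℕ) :
    ∑ n ∈ Finset.range N, zetaDefect s n
      = (1 - s) * ∑ n ∈ Finset.range N, ((n : ℂ) + 1) ^ (-s) + 1 - ((N : ℂ) + 1) ^ (1 - s) := by
  induction N with
  | zero => simp
  | succ N ih =>
    rw [Finset.sum_range_succ, ih, Finset.sum_range_succ, zetaDefect, Nat.cast_succ,
      add_assoc (N : ℂ) 1 1, one_add_one_eq_two]
    ring

lemma summable_nat_add_one_rpow {p : ℝ} (hp : p < -1) :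
    Summable (fun n : ℕ => ((n : ℝ) + 1) ^ p) := by
  simpa using (summable_nat_add_iff 1).mpr (Real.summable_nat_rpow.mpr hp)

lemma summable_zetaDefect {s : ℂ} (hs : 0 < s.re) : Summable (zetaDefect s) :=
  .of_norm_bounded ((summable_nat_add_one_rpow (by linarith)).mul_left _)
    (norm_zetaDefect_le (by linarith))

lemma differentiable_zetaDefect (n : ℕ) : Differentiable ℂ (fun s => zetaDefect s n) := by
  unfold zetaDefect
  fun_prop (disch := exact Or.inl (by norm_cast))

lemma differentiableOn_tsum_zetaDefect :
    DifferentiableOn ℂ (fun s => ∑' n, zetaDefect s n) {s | 0 < s.re} := by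
  intro s₀ (hs₀ : 0 < s₀.re)
  set σ := s₀.re / 2
  set R := ‖s₀‖ + 1
  set U := {s : ℂ | σ < s.re} ∩ Metric.ball 0 R
  have hσ : 0 < σ := half_pos hs₀
  have hU : IsOpen U := (isOpen_lt continuous_const Complex.continuous_re).inter Metric.isOpen_ball
  have hs₀U : s₀ ∈ U := ⟨half_lt_self hs₀, by simp [R]⟩
  have hbound : ∀ n, ∀ s ∈ U, ‖zetaDefect s n‖ ≤ (1 + R) * R * ((n : ℝ) + 1) ^ (-σ - 1) := by
    intro n s ⟨(hσs : σ < s.re), hR⟩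
    have hsR : ‖s‖ ≤ R := by simpa using (Metric.mem_ball.1 hR).le
    calc ‖zetaDefect s n‖ ≤ ‖1 - s‖ * ‖s‖ * ((n : ℝ) + 1) ^ (-s.re - 1) :=
          norm_zetaDefect_le (by linarith) n
      _ ≤ (1 + R) * R * ((n : ℝ) + 1) ^ (-σ - 1) := by
          gcongr
          · exact (norm_sub_le _ _).trans (by simpa using hsR)
          · exact_mod_cast Nat.le_add_left 1 n
  have hdiff := Complex.differentiableOn_tsum_of_summable_norm
    ((summable_nat_add_one_rpow (by linarith)).mul_left _)
    (fun n => (differentiable_zetaDefect n).differentiableOn) hU hbound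
  exact (hdiff.differentiableAt (hU.mem_nhds hs₀U)).differentiableWithinAt

lemma tendsto_nat_add_one_cpow_atTop {c : ℂ} (hc : c.re < 0) :
    Tendsto (fun N : ℕ => ((N : ℂ) + 1) ^ c) atTop (𝓝 0) := by
  rw [tendsto_zero_iff_norm_tendsto_zero]
  have h := (tendsto_rpow_neg_atTop (neg_pos.2 hc)).comp
    (tendsto_atTop_add_const_right _ 1 tendsto_natCast_atTop_atTop)
  refine h.congr fun N => ?_
  rw [Function.comp_apply, neg_neg, ← Complex.norm_cpow_eq_rpow_re_of_pos (by positivity)]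
  push_cast
  rfl

lemma tsum_zetaDefect_of_one_lt_re {s : ℂ} (hs : 1 < s.re) :
    ∑' n, zetaDefect s n = (1 - s) * riemannZeta s + 1 := by
  have hζ : HasSum (fun n : ℕ => ((n : ℂ) + 1) ^ (-s)) (riemannZeta s) := by
    have h := ((summable_nat_add_iff 1).mpr (Complex.summable_one_div_nat_cpow.mpr hs)).hasSum
    push_cast at h
    rw [← zeta_eq_tsum_one_div_nat_add_one_cpow hs] at h
    simpa [Complex.cpow_neg] using h
  refine tendsto_nhds_unique (summable_zetaDefect (by linarith)).hasSum.tendsto_sum_nat ?_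
  simp only [sum_range_zetaDefect]
  simpa using ((hζ.tendsto_sum_nat.const_mul (1 - s)).add_const 1).sub
    (tendsto_nat_add_one_cpow_atTop (c := 1 - s) (by rw [Complex.sub_re, Complex.one_re]; linarith))

lemma hasSum_zetaDefect {s : ℂ} (hs : 0 < s.re) :
    HasSum (zetaDefect s) ((1 - s) * riemannZeta₀ s) := by
  have hU : IsOpen {s : ℂ | 0 < s.re} := isOpen_lt continuous_const Complex.continuous_re
  have hf := differentiableOn_tsum_zetaDefect.analyticOnNhd hU
  have hg : AnalyticOnNhd ℂ (fun s => (1 - s) * riemannZeta₀ s) {s | 0 < s.re} :=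
    (by fun_prop : Differentiable ℂ (fun s => (1 - s) * riemannZeta₀ s)).differentiableOn
      |>.analyticOnNhd hU
  have hnear : (fun s => ∑' n, zetaDefect s n) =ᶠ[𝓝 2] (fun s => (1 - s) * riemannZeta₀ s) := by
    filter_upwards [(isOpen_lt continuous_const Complex.continuous_re).mem_nhds
      (show (1 : ℝ) < (2 : ℂ).re by norm_num)] with s (hs : 1 < s.re)
    have hs1 : s ≠ 1 := by rintro rfl; simp at hs
    rw [tsum_zetaDefect_of_one_lt_re hs, riemannZeta_eq_inv_sub_add hs1]
    field_simp [sub_ne_zero.2 hs1, sub_ne_zero.2 hs1.symm]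
    ring
  convert (summable_zetaDefect hs).hasSum using 1
  exact (hf.eqOn_of_preconnected_of_eventuallyEq hg (convex_halfSpace_re_gt 0).isPreconnected
    (show (0 : ℝ) < (2 : ℂ).re by norm_num) hnear hs).symm

lemma tendsto_sum_cpow_sub_riemannZeta {s : ℂ} (hs : 0 < s.re) (hs1 : s ≠ 1) :
    Tendsto (fun N : ℕ =>
        ∑ n ∈ Finset.range N, ((n : ℂ) + 1) ^ (-s) - (N : ℂ) ^ (1 - s) / (1 - s))
      atTop (𝓝 (riemannZeta s)) := by
  have h1s : 1 - s ≠ 0 := sub_ne_zero.2 hs1.symm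
  have hshift :
      Tendsto (fun N : ℕ => ((N : ℂ) + 1) ^ (1 - s) - (N : ℂ) ^ (1 - s)) atTop (𝓝 0) := by
    rw [tendsto_zero_iff_norm_tendsto_zero]
    have hlim := ((tendsto_rpow_neg_atTop hs).comp tendsto_natCast_atTop_atTop).const_mul ‖1 - s‖
    rw [mul_zero] at hlim
    refine squeeze_zero' (.of_forall fun _ => norm_nonneg _) ?_ hlim
    filter_upwards [eventually_ge_atTop 1] with N hN
    have h := norm_ofReal_cpow_sub_ofReal_cpow_le (a := N) (x := N + 1) (by exact_mod_cast hN)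
      (by linarith) (c := 1 - s) (by rw [Complex.sub_re, Complex.one_re]; linarith)
    push_cast at h
    simpa using h
  have h := (((hasSum_zetaDefect hs).tendsto_sum_nat.sub_const 1).div_const (1 - s)).add
    (hshift.div_const (1 - s))
  rw [riemannZeta_eq_inv_sub_add hs1]
  convert h using 1
  · ext N
    rw [sum_range_zetaDefect]
    field_simp
    ring
  · have hs1' : s - 1 ≠ 0 := sub_ne_zero.2 hs1
    congr 1
    field_simp
    ring

lemma ofReal_cpow_one_half {x : ℝ} (hx : 0 ≤ x) : (x : ℂ) ^ (1 / 2 : ℂ) = √x := by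
  rw [Real.sqrt_eq_rpow, Complex.ofReal_cpow hx]
  norm_num

lemma one_div_sqrt_mul_sqrt_add_sqrt_sq {x : ℝ} (hx : 0 ≤ x) :
    1 / (√(x + 1) * (√(x + 1) + √x) ^ 2) = 2 * √(x + 1) - 2 * √x - 1 / √(x + 1) := by
  have ha : 0 < √(x + 1) := Real.sqrt_pos.2 (by linarith)
  have hconj : (√(x + 1) - √x) * (√(x + 1) + √x) = 1 := by
    rw [mul_comm, ← sq_sub_sq, Real.sq_sqrt (by linarith), Real.sq_sqrt hx]
    ring
  field_simp
  linear_combination (-2 * √(x + 1) ^ 2 - 2 * √(x + 1) * √x - 1) * hconj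

lemma sum_range_one_div_sqrt_mul_sqrt_add_sqrt_sq (N : ℕ) :
    ∑ n ∈ Finset.range N, 1 / (√((n : ℝ) + 1) * (√((n : ℝ) + 1) + √(n : ℝ)) ^ 2)
      = 2 * √(N : ℝ) - ∑ n ∈ Finset.range N, 1 / √((n : ℝ) + 1) := by
  induction N with
  | zero => simp
  | succ N ih =>
    rw [Finset.sum_range_succ, ih, Finset.sum_range_succ,
      one_div_sqrt_mul_sqrt_add_sqrt_sq N.cast_nonneg]
    push_cast
    ring

lemma tendsto_sum_one_div_sqrt_sub_two_mul_sqrt :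
    Tendsto (fun N : ℕ => ∑ n ∈ Finset.range N, 1 / √((n : ℝ) + 1) - 2 * √(N : ℝ))
      atTop (𝓝 (riemannZeta (1 / 2)).re) := by
  have hpow (n : ℕ) : ((n : ℂ) + 1) ^ (-(1 / 2 : ℂ)) = ((1 / √((n : ℝ) + 1) : ℝ) : ℂ) := by
    have hcast : (n : ℂ) + 1 = ((n + 1 : ℝ) : ℂ) := by push_cast; rfl
    rw [Complex.cpow_neg, hcast, ofReal_cpow_one_half (by positivity)]
    push_cast
    ring
  refine ((Complex.continuous_re.tendsto _).comp (tendsto_sum_cpow_sub_riemannZeta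
    (s := 1 / 2) (by norm_num) (by norm_num))).congr fun N => ?_
  rw [Function.comp_apply, Finset.sum_congr rfl fun n _ => hpow n,
    show (1 : ℂ) - 1 / 2 = 1 / 2 by norm_num, ← Complex.ofReal_natCast,
    ofReal_cpow_one_half N.cast_nonneg]
  simp only [← Complex.ofReal_sum, div_div_eq_mul_div, div_one, ← Complex.ofReal_ofNat,
    ← Complex.ofReal_mul, ← Complex.ofReal_sub, Complex.ofReal_re]
  ring

/-- The series `(2π)^{-1/2}·∑_{n≥1} [√n·(√n + √(n−1))²]^{-1}` converges and equals
`−ζ(1/2)/√(2π)`. -/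
theorem kingman_constant_eq_zeta :
    Summable (fun n : ℕ =>
      1 / (Real.sqrt ((n : ℝ) + 1) * (Real.sqrt ((n : ℝ) + 1) + Real.sqrt (n : ℝ)) ^ 2)) ∧
    (Real.sqrt (2 * π))⁻¹ *
        (∑' n : ℕ,
          1 / (Real.sqrt ((n : ℝ) + 1) * (Real.sqrt ((n : ℝ) + 1) + Real.sqrt (n : ℝ)) ^ 2))
      = -(riemannZeta (1 / 2)).re / Real.sqrt (2 * π) := by
  have hsum : HasSum (fun n : ℕ => 1 / (√((n : ℝ) + 1) * (√((n : ℝ) + 1) + √(n : ℝ)) ^ 2))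
      (-(riemannZeta (1 / 2)).re) := by
    rw [hasSum_iff_tendsto_nat_of_nonneg (fun n => by positivity)]
    refine tendsto_sum_one_div_sqrt_sub_two_mul_sqrt.neg.congr fun N => ?_
    rw [sum_range_one_div_sqrt_mul_sqrt_add_sqrt_sq]
    ring
  exact ⟨hsum.summable, by rw [hsum.tsum_eq, inv_mul_eq_div]⟩
end
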